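/- arXiv:0807.3573 — 4 statements merged into one kernel-verified Lean document; each statement's English description precedes it below -/
import Mathlib

section
/- Trust region optimality criterion: Let N ≥ 1, let Ĥ be a real symmetric N×N matrix, ĝ ∈ ℝ^N, F₀ ∈ ℝ, Δ > 0, and define Q̂(p) := F₀ + ĝᵀp + (1/2)pᵀĤp. A vector p* ∈ ℝ^N minimizes Q̂ over the set {p ∈ ℝ^N : ‖p‖ ≤ Δ} if and only if ‖p*‖ ≤ Δ and there exists a scalar λ* ≥ 0 such that: (1) (Ĥ + λ* I)p* = −ĝ; (2) λ*(Δ − ‖p*‖) = 0; and (3) the matrix Ĥ + λ* I is positive semidefinite. -/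
/-!
Write `r = g + H x` for the gradient of the model at `x`, so that
`Q (x + d) = Q x + ⟪r, d⟫ + ½ ⟪d, H d⟫`. If `(H + λ I) x = -g`, this becomes
`Q y - Q x = ½ ⟪y - x, (H + λ I)(y - x)⟫ + (λ / 2)(‖x‖² - ‖y‖²)`, from which sufficiency of the
conditions is immediate.

For necessity, a minimizer over the (convex) ball satisfies `⟪r, y - x⟫ ≥ 0` for every `y` in
the ball. In the interior this forces `r = 0`, and then `H ⪰ 0` by looking at `Q (x + ε w)`.
On the boundary it says that `-r` lies in the normal cone of the ball at `x`, so `r = -λ x`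
with `λ ≥ 0` by the equality case of Cauchy–Schwarz. The identity above then shows
`⟪y - x, (H + λ I)(y - x)⟫ ≥ 0` whenever `‖y‖ = ‖x‖`; every direction `w` with `⟪x, w⟫ ≠ 0` is
a multiple of such a `y - x`, and the remaining directions follow by continuity.
-/

open Matrix Filter Topology Set Metric
open scoped RealInnerProductSpace

lemma nonneg_at_zero_of_forall_Ioc {f : ℝ → ℝ} (hf : ContinuousAt f 0)
    (h : ∀ t ∈ Ioc (0 : ℝ) 1, 0 ≤ f t) : 0 ≤ f 0 :=
  ge_of_tendsto (hf.tendsto.mono_left nhdsWithin_le_nhds)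
    (by filter_upwards [Ioc_mem_nhdsGT one_pos] using h)

lemma exists_pos_add_smul_mem_closedBall {E : Type*} [NormedAddCommGroup E] [NormedSpace ℝ E]
    {x : E} {Δ : ℝ} (hx : ‖x‖ < Δ) (w : E) :
    ∃ ε > (0 : ℝ), x + ε • w ∈ closedBall (0 : E) Δ := by
  have hcont : Continuous fun ε : ℝ => x + ε • w := by fun_prop
  have hball : ∀ᶠ ε in 𝓝[>] (0 : ℝ), x + ε • w ∈ ball (0 : E) Δ :=
    nhdsWithin_le_nhds <| hcont.continuousAt.preimage_mem_nhds <|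
      isOpen_ball.mem_nhds (by simpa using hx)
  obtain ⟨ε, hε, hpos⟩ := (hball.and self_mem_nhdsWithin).exists
  exact ⟨ε, hpos, ball_subset_closedBall hε⟩

lemma exists_nonneg_add_smul_eq_zero_of_forall_inner_sub_nonneg {E : Type*}
    [NormedAddCommGroup E] [InnerProductSpace ℝ E] {r x : E} (hx : x ≠ 0)
    (h : ∀ y : E, ‖y‖ ≤ ‖x‖ → 0 ≤ ⟪r, y - x⟫) : ∃ lam : ℝ, 0 ≤ lam ∧ r + lam • x = 0 := by
  rcases eq_or_ne r 0 with rfl | hr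
  · exact ⟨0, le_rfl, by simp⟩
  have hr' : 0 < ‖r‖ := norm_pos_iff.2 hr
  have hx' : 0 < ‖x‖ := norm_pos_iff.2 hx
  have hy : ‖-(‖x‖ / ‖r‖) • r‖ ≤ ‖x‖ := by
    rw [norm_smul, norm_neg, Real.norm_of_nonneg (by positivity), div_mul_cancel₀ _ hr'.ne']
  have h1 := h _ hy
  rw [inner_sub_right, inner_smul_right, real_inner_self_eq_norm_sq] at h1
  have hcs : ⟪r, -x⟫ = ‖r‖ * ‖-x‖ := by
    refine le_antisymm (real_inner_le_norm _ _) ?_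
    rw [inner_neg_right, norm_neg]
    have : ‖x‖ / ‖r‖ * ‖r‖ ^ 2 = ‖r‖ * ‖x‖ := by field_simp
    linarith
  rw [inner_eq_norm_mul_iff_real, norm_neg] at hcs
  have hrx : ‖r‖ • x = -(‖x‖ • r) := by rw [hcs, smul_neg, neg_neg]
  refine ⟨‖r‖ / ‖x‖, by positivity, ?_⟩
  rw [div_eq_inv_mul, mul_smul, hrx, smul_neg, inv_smul_smul₀ hx'.ne', add_neg_cancel]

section QuadraticModel

variable {E : Type*} [NormedAddCommGroup E] [InnerProductSpace ℝ E] {T : E →ₗ[ℝ] E} {g : E}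

noncomputable def quadraticModel (T : E →ₗ[ℝ] E) (g x : E) : ℝ := ⟪g, x⟫ + 1 / 2 * ⟪x, T x⟫

lemma quadraticModel_add (hT : T.IsSymmetric) (x d : E) :
    quadraticModel T g (x + d) = quadraticModel T g x + ⟪g + T x, d⟫ + 1 / 2 * ⟪d, T d⟫ := by
  simp only [quadraticModel, map_add, inner_add_left, inner_add_right, real_inner_comm (T x) d,
    hT x d]
  ring

lemma quadraticModel_sub_of_apply_eq_neg (hT : T.IsSymmetric) {lam : ℝ} {x : E}
    (hx : (T + lam • 1) x = -g) (y : E) :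
    quadraticModel T g y - quadraticModel T g x =
      1 / 2 * ⟪y - x, (T + lam • 1) (y - x)⟫ + lam / 2 * (‖x‖ ^ 2 - ‖y‖ ^ 2) := by
  obtain ⟨d, rfl⟩ : ∃ d, y = x + d := ⟨y - x, by abel⟩
  have hgrad : g + T x = -(lam • x) := by
    have hx' : T x + lam • x = -g := by simpa using hx
    rw [eq_neg_iff_add_eq_zero] at hx' ⊢
    rw [← hx']
    abel
  simp only [quadraticModel_add hT, hgrad, add_sub_cancel_left, LinearMap.add_apply,
    LinearMap.smul_apply, Module.End.one_apply, inner_add_right, inner_neg_left,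
    real_inner_smul_left, real_inner_smul_right, real_inner_self_eq_norm_sq, norm_add_sq_real]
  ring

theorem isMinOn_quadraticModel_of_kkt (hT : T.IsSymmetric) {Δ lam : ℝ} {x : E} (hlam : 0 ≤ lam)
    (hx : (T + lam • 1) x = -g) (hslack : lam * (Δ - ‖x‖) = 0)
    (hpsd : ∀ w, 0 ≤ ⟪w, (T + lam • 1) w⟫) :
    IsMinOn (quadraticModel T g) (closedBall 0 Δ) x := by
  refine isMinOn_iff.2 fun y hy => ?_
  have hnorm : lam * ‖y‖ ^ 2 ≤ lam * ‖x‖ ^ 2 := by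
    rcases mul_eq_zero.1 hslack with h | h
    · simp [h]
    · gcongr
      linarith [mem_closedBall_zero_iff.1 hy]
  have := quadraticModel_sub_of_apply_eq_neg hT hx y
  nlinarith [hpsd (y - x)]

lemma IsMinOn.inner_add_apply_sub_nonneg (hT : T.IsSymmetric) {s : Set E} (hs : Convex ℝ s)
    {x y : E} (hmin : IsMinOn (quadraticModel T g) s x) (hx : x ∈ s) (hy : y ∈ s) :
    0 ≤ ⟪g + T x, y - x⟫ := by
  have hslope : ∀ t ∈ Ioc (0 : ℝ) 1,
      0 ≤ ⟪g + T x, y - x⟫ + t * (1 / 2 * ⟪y - x, T (y - x)⟫) := by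
    rintro t ⟨ht0, ht1⟩
    have h := isMinOn_iff.1 hmin _ (hs.add_smul_sub_mem hx hy ⟨ht0.le, ht1⟩)
    rw [quadraticModel_add hT, map_smul, real_inner_smul_left, real_inner_smul_right,
      real_inner_smul_right] at h
    refine nonneg_of_mul_nonneg_right (a := t) ?_ ht0
    linarith
  simpa using nonneg_at_zero_of_forall_Ioc (by fun_prop) hslope

theorem IsMinOn.apply_eq_neg_and_inner_apply_self_nonneg_of_norm_lt (hT : T.IsSymmetric)
    {Δ : ℝ} {x : E} (hmin : IsMinOn (quadraticModel T g) (closedBall 0 Δ) x) (hx : ‖x‖ < Δ) :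
    T x = -g ∧ ∀ w, 0 ≤ ⟪w, T w⟫ := by
  have hxmem : x ∈ closedBall (0 : E) Δ := mem_closedBall_zero_iff.2 hx.le
  have hgrad : g + T x = 0 := by
    obtain ⟨ε, hε, hmem⟩ := exists_pos_add_smul_mem_closedBall hx (-(g + T x))
    have h := hmin.inner_add_apply_sub_nonneg hT (convex_closedBall 0 Δ) hxmem hmem
    rw [add_sub_cancel_left, real_inner_smul_right, inner_neg_right,
      real_inner_self_eq_norm_sq] at h
    have : ‖g + T x‖ ^ 2 ≤ 0 := by nlinarith
    simpa using this
  refine ⟨(neg_eq_of_add_eq_zero_right hgrad).symm, fun w => ?_⟩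
  obtain ⟨ε, hε, hmem⟩ := exists_pos_add_smul_mem_closedBall hx w
  have h := isMinOn_iff.1 hmin _ hmem
  rw [quadraticModel_add hT, hgrad, inner_zero_left, map_smul, real_inner_smul_left,
    real_inner_smul_right] at h
  nlinarith [mul_pos hε hε]

theorem IsMinOn.inner_apply_self_nonneg_of_sphere (hT : T.IsSymmetric) {lam : ℝ} {x : E}
    (hx0 : x ≠ 0) (hx : (T + lam • 1) x = -g)
    (hmin : IsMinOn (quadraticModel T g) (sphere 0 ‖x‖) x) (w : E) :
    0 ≤ ⟪w, (T + lam • 1) w⟫ := by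
  set S := T + lam • 1
  have hoff : ∀ w, ⟪x, w⟫ ≠ 0 → 0 ≤ ⟪w, S w⟫ := by
    intro w hw
    have hw0 : ‖w‖ ≠ 0 := by rintro h; simp_all
    -- `x + t • w` is the second point where the line through `x` in direction `w` meets the sphere
    set t := -2 * ⟪x, w⟫ / ‖w‖ ^ 2
    have ht : t * ‖w‖ ^ 2 = -2 * ⟪x, w⟫ := div_mul_cancel₀ _ (by positivity)
    have ht0 : t ≠ 0 := by rintro h; simp_all
    have hy : x + t • w ∈ sphere (0 : E) ‖x‖ := by
      rw [mem_sphere_zero_iff_norm, ← sq_eq_sq₀ (norm_nonneg _) (norm_nonneg _),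
        norm_add_sq_real, norm_smul, real_inner_smul_right, mul_pow, Real.norm_eq_abs, sq_abs]
      linear_combination t * ht
    have h := quadraticModel_sub_of_apply_eq_neg hT hx (x + t • w)
    rw [add_sub_cancel_left, mem_sphere_zero_iff_norm.1 hy, sub_self, mul_zero, add_zero,
      map_smul, real_inner_smul_left, real_inner_smul_right] at h
    have := isMinOn_iff.1 hmin _ hy
    nlinarith [mul_self_pos.2 ht0]
  by_cases hw : ⟪x, w⟫ = 0
  · have hpert : ∀ ε ∈ Ioc (0 : ℝ) 1, 0 ≤ ⟪w + ε • x, S w + ε • S x⟫ := by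
      rintro ε ⟨hε, -⟩
      rw [← map_smul, ← map_add]
      refine hoff _ ?_
      rw [inner_add_right, hw, real_inner_smul_right, real_inner_self_eq_norm_sq]
      positivity
    simpa using nonneg_at_zero_of_forall_Ioc (by fun_prop) hpert
  · exact hoff w hw

theorem isMinOn_quadraticModel_closedBall_iff (hT : T.IsSymmetric) {Δ : ℝ} (hΔ : 0 < Δ)
    (x : E) :
    (‖x‖ ≤ Δ ∧ IsMinOn (quadraticModel T g) (closedBall 0 Δ) x) ↔
      ‖x‖ ≤ Δ ∧ ∃ lam : ℝ, 0 ≤ lam ∧ (T + lam • 1) x = -g ∧ lam * (Δ - ‖x‖) = 0 ∧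
        ∀ w, 0 ≤ ⟪w, (T + lam • 1) w⟫ := by
  refine ⟨fun ⟨hxΔ, hmin⟩ => ⟨hxΔ, ?_⟩, fun ⟨hxΔ, lam, hlam, hx, hslack, hpsd⟩ =>
    ⟨hxΔ, isMinOn_quadraticModel_of_kkt hT hlam hx hslack hpsd⟩⟩
  rcases hxΔ.lt_or_eq with hlt | rfl
  · obtain ⟨hx, hpsd⟩ := hmin.apply_eq_neg_and_inner_apply_self_nonneg_of_norm_lt hT hlt
    exact ⟨0, le_rfl, by simpa using hx, zero_mul _, by simpa using hpsd⟩
  · have hx0 : x ≠ 0 := norm_pos_iff.1 hΔ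
    obtain ⟨lam, hlam, hgrad⟩ := exists_nonneg_add_smul_eq_zero_of_forall_inner_sub_nonneg hx0
      fun y hy => hmin.inner_add_apply_sub_nonneg hT (convex_closedBall 0 _) (by simp)
        (mem_closedBall_zero_iff.2 hy)
    have hx : (T + lam • 1) x = -g := by
      simp only [LinearMap.add_apply, LinearMap.smul_apply, Module.End.one_apply,
        eq_neg_iff_add_eq_zero, ← hgrad]
      abel
    exact ⟨lam, hlam, hx, by rw [sub_self, mul_zero],
      (hmin.on_subset sphere_subset_closedBall).inner_apply_self_nonneg_of_sphere hT hx0 hx⟩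

end QuadraticModel

section EuclideanSpace

variable {ι : Type*} [Fintype ι]

lemma EuclideanSpace.norm_toLp_eq_sqrt (p : ι → ℝ) :
    ‖WithLp.toLp 2 p‖ = √(∑ i, p i ^ 2) := by
  simp [EuclideanSpace.norm_eq]

lemma EuclideanSpace.inner_toLp_toLp_real (p q : ι → ℝ) :
    ⟪WithLp.toLp 2 p, WithLp.toLp 2 q⟫ = p ⬝ᵥ q := by
  rw [EuclideanSpace.inner_toLp_toLp, star_trivial, dotProduct_comm]

variable [DecidableEq ι]

lemma Matrix.toEuclideanLin_add_smul_one_toLp (H : Matrix ι ι ℝ) (lam : ℝ) (p : ι → ℝ) :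
    (toEuclideanLin H + lam • 1) (WithLp.toLp 2 p) = WithLp.toLp 2 ((H + lam • 1) *ᵥ p) := by
  simp [add_mulVec, smul_mulVec]

lemma quadraticModel_toEuclideanLin (H : Matrix ι ι ℝ) (g p : ι → ℝ) :
    quadraticModel (toEuclideanLin H) (WithLp.toLp 2 g) (WithLp.toLp 2 p) =
      g ⬝ᵥ p + 1 / 2 * (p ⬝ᵥ H *ᵥ p) := by
  simp [quadraticModel, EuclideanSpace.inner_toLp_toLp_real]

end EuclideanSpace

theorem trust_region_optimality_general (N : ℕ)
    (H : Matrix (Fin N) (Fin N) ℝ) (hH : H.IsSymm)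
    (g : Fin N → ℝ) (F₀ Δ : ℝ) (hΔ : 0 < Δ)
    (Q : (Fin N → ℝ) → ℝ)
    (hQ : ∀ p : Fin N → ℝ, Q p = F₀ + g ⬝ᵥ p + (1 / 2) * (p ⬝ᵥ H.mulVec p))
    (pstar : Fin N → ℝ) :
    (Real.sqrt (∑ i, pstar i ^ 2) ≤ Δ ∧
      ∀ p : Fin N → ℝ, Real.sqrt (∑ i, p i ^ 2) ≤ Δ → Q pstar ≤ Q p) ↔
    (Real.sqrt (∑ i, pstar i ^ 2) ≤ Δ ∧
      ∃ lam : ℝ, 0 ≤ lam ∧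
        (H + lam • (1 : Matrix (Fin N) (Fin N) ℝ)).mulVec pstar = -g ∧
        lam * (Δ - Real.sqrt (∑ i, pstar i ^ 2)) = 0 ∧
        ∀ p : Fin N → ℝ,
          0 ≤ p ⬝ᵥ (H + lam • (1 : Matrix (Fin N) (Fin N) ℝ)).mulVec p) := by
  have hT : (toEuclideanLin H).IsSymmetric :=
    isSymmetric_toEuclideanLin_iff.2 (isHermitian_iff_isSymm.2 hH)
  have key := isMinOn_quadraticModel_closedBall_iff (g := WithLp.toLp 2 g) hT hΔ
    (WithLp.toLp 2 pstar)
  simp only [isMinOn_iff, (WithLp.toLp_surjective 2).forall, mem_closedBall_zero_iff,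
    EuclideanSpace.norm_toLp_eq_sqrt, quadraticModel_toEuclideanLin,
    Matrix.toEuclideanLin_add_smul_one_toLp, EuclideanSpace.inner_toLp_toLp_real,
    ← WithLp.toLp_neg, (WithLp.toLp_injective 2).eq_iff] at key
  simpa only [hQ, add_assoc, add_le_add_iff_left] using key

/-- **Trust region optimality criterion.** A vector `pstar` minimizes the quadratic model
`Q(p) = F₀ + gᵀp + (1/2) pᵀ H p` over the Euclidean ball of radius `Δ` if and only if it is
feasible and there is a Lagrange multiplier `lam ≥ 0` with `(H + lam I) pstar = -g`,
complementary slackness `lam (Δ - ‖pstar‖) = 0`, and `H + lam I` positive semidefinite. -/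
theorem trust_region_optimality (N : ℕ) (hN : 1 ≤ N)
    (H : Matrix (Fin N) (Fin N) ℝ) (hH : H.IsSymm)
    (g : Fin N → ℝ) (F₀ Δ : ℝ) (hΔ : 0 < Δ)
    (Q : (Fin N → ℝ) → ℝ)
    (hQ : ∀ p : Fin N → ℝ, Q p = F₀ + g ⬝ᵥ p + (1 / 2) * (p ⬝ᵥ H.mulVec p))
    (pstar : Fin N → ℝ) :
    (Real.sqrt (∑ i, pstar i ^ 2) ≤ Δ ∧
      ∀ p : Fin N → ℝ, Real.sqrt (∑ i, p i ^ 2) ≤ Δ → Q pstar ≤ Q p) ↔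
    (Real.sqrt (∑ i, pstar i ^ 2) ≤ Δ ∧
      ∃ lam : ℝ, 0 ≤ lam ∧
        (H + lam • (1 : Matrix (Fin N) (Fin N) ℝ)).mulVec pstar = -g ∧
        lam * (Δ - Real.sqrt (∑ i, pstar i ^ 2)) = 0 ∧
        ∀ p : Fin N → ℝ,
          0 ≤ p ⬝ᵥ (H + lam • (1 : Matrix (Fin N) (Fin N) ℝ)).mulVec p) :=
  trust_region_optimality_general N H hH g F₀ Δ hΔ Q hQ pstar
end

section
/- Well-posedness of the discrete variational step: Let N ≥ 2, τ > 0, m > 0, γ > 1, and let x̂₁, …, x̂_N ∈ ℝ. Define, on the open set Ω := { z ∈ ℝ^N : z_i < z_{i+1} for all 1 ≤ i ≤ N−1 }, the functional F(z) := ∑_{i=1}^N (3/(4τ²)) m (z_i − x̂_i)² + ∑_{i=1}^{N−1} (1/(γ−1)) (m/(z_{i+1} − z_i))^γ (z_{i+1} − z_i). Then F attains its infimum over Ω, and the minimizer is unique. -/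
/-!
For `d > 0` the internal energy of a cell is `(1/(γ-1)) (m/d)^γ d = m^γ/(γ-1) · d^(1-γ)`, so on
strictly increasing configurations `F` is a positive multiple of `∑ (zᵢ - x̂ᵢ)²` plus a positive
multiple of `∑ dᵢ^p` with `p = 1 - γ < 0`, where `dᵢ = zᵢ₊₁ - zᵢ` are the gaps.
The first part is strictly convex and `d ↦ d^p` is convex, so `F` is strictly convex on the convex
set of increasing configurations, which gives uniqueness. For existence, a sublevel set of `F`
keeps every particle within a fixed distance of `x̂` and every gap above a fixed `ε > 0`
(as `d^p → ∞` when `d → 0`), hence lies in a compact set of increasing configurations on which `F`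
is continuous.
-/

open Set Real

lemma Real.convexOn_rpow_of_nonpos {p : ℝ} (hp : p ≤ 0) :
    ConvexOn ℝ (Ioi 0) fun x : ℝ => x ^ p := by
  refine ⟨convex_Ioi 0, fun x (hx : 0 < x) y (hy : 0 < y) a b ha hb hab => ?_⟩
  simp only [smul_eq_mul]
  -- weighted AM-GM twice, once for `x, y` and once for `x ^ p, y ^ p`
  calc (a * x + b * y) ^ p ≤ (x ^ a * y ^ b) ^ p :=
        rpow_le_rpow_of_nonpos (by positivity)
          (geom_mean_le_arith_mean2_weighted ha hb hx.le hy.le hab) hp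
    _ = (x ^ p) ^ a * (y ^ p) ^ b := by
        rw [mul_rpow (by positivity) (by positivity), ← rpow_mul hx.le, ← rpow_mul hx.le,
          ← rpow_mul hy.le, ← rpow_mul hy.le, mul_comm a, mul_comm b]
    _ ≤ a * x ^ p + b * y ^ p :=
        geom_mean_le_arith_mean2_weighted ha hb (by positivity) (by positivity) hab

lemma convex_setOf_strictMono {ι : Type*} [Preorder ι] :
    Convex ℝ {z : ι → ℝ | StrictMono z} := by
  intro z (hz : StrictMono z) w (hw : StrictMono w) a b ha hb hab
  rcases ha.eq_or_lt with rfl | ha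
  · simpa [show b = 1 by linarith] using hw
  · exact fun i j hij => add_lt_add_of_lt_of_le (mul_lt_mul_of_pos_left (hz hij) ha)
      (mul_le_mul_of_nonneg_left (hw hij).le hb)

lemma strictConvexOn_const_mul_sum_sq_sub {ι : Type*} [Fintype ι] {c : ℝ} (hc : 0 < c)
    (x : ι → ℝ) : StrictConvexOn ℝ univ fun z : ι → ℝ => c * ∑ i, (z i - x i) ^ 2 := by
  refine ⟨convex_univ, fun z _ w _ hzw a b ha hb hab => ?_⟩
  obtain ⟨i₀, hi₀⟩ := Function.ne_iff.mp hzw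
  have hdefect : ∀ i, a * (z i - x i) ^ 2 + b * (w i - x i) ^ 2 - (a * z i + b * w i - x i) ^ 2
      = a * b * (z i - w i) ^ 2 := by
    intro i
    obtain rfl : b = 1 - a := by linarith
    ring
  have hsum : ∑ i, (a * z i + b * w i - x i) ^ 2
      < a * ∑ i, (z i - x i) ^ 2 + b * ∑ i, (w i - x i) ^ 2 := by
    rw [Finset.mul_sum, Finset.mul_sum, ← Finset.sum_add_distrib]
    refine Finset.sum_lt_sum (fun i _ => ?_) ⟨i₀, Finset.mem_univ _, ?_⟩
    · nlinarith [hdefect i, mul_nonneg (mul_nonneg ha.le hb.le) (sq_nonneg (z i - w i))]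
    · have : 0 < a * b * (z i₀ - w i₀) ^ 2 := by
        have := sub_ne_zero.mpr hi₀
        positivity
      linarith [hdefect i₀]
  simp only [Pi.add_apply, Pi.smul_apply, smul_eq_mul]
  nlinarith

lemma exists_isMinOn_of_isCompact_of_le_subset {α β : Type*} [TopologicalSpace α]
    [LinearOrder β] [TopologicalSpace β] [ClosedIicTopology β] {f : α → β} {S K : Set α}
    {x₀ : α} (hx₀ : x₀ ∈ S) (hK : IsCompact K) (hKS : K ⊆ S) (hf : ContinuousOn f K)
    (hsub : ∀ w ∈ S, f w ≤ f x₀ → w ∈ K) :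
    ∃ z ∈ S, IsMinOn f S z := by
  have hx₀K := hsub x₀ hx₀ le_rfl
  obtain ⟨z, hzK, hzmin⟩ := hK.exists_isMinOn ⟨x₀, hx₀K⟩ hf
  refine ⟨z, hKS hzK, fun w hw => ?_⟩
  rcases le_total (f w) (f x₀) with hwx₀ | hx₀w
  · exact hzmin (hsub w hw hwx₀)
  · exact (hzmin hx₀K).trans hx₀w

section DiscreteEnergy

variable {n : ℕ}

noncomputable def discreteEnergy (a b p : ℝ) (xhat z : Fin (n + 1) → ℝ) : ℝ :=
  a * ∑ i, (z i - xhat i) ^ 2 + b * ∑ i : Fin n, (z i.succ - z i.castSucc) ^ p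

lemma StrictMono.sub_castSucc_pos {z : Fin (n + 1) → ℝ} (hz : StrictMono z) (i : Fin n) :
    0 < z i.succ - z i.castSucc :=
  sub_pos.mpr (hz i.castSucc_lt_succ)

lemma convexOn_sum_rpow_sub_castSucc {p : ℝ} (hp : p ≤ 0) :
    ConvexOn ℝ {z : Fin (n + 1) → ℝ | StrictMono z}
      fun z => ∑ i : Fin n, (z i.succ - z i.castSucc) ^ p := by
  refine ⟨convex_setOf_strictMono, fun z hz w hw a b ha hb hab => ?_⟩
  simp only [Pi.add_apply, Pi.smul_apply, smul_eq_mul]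
  rw [Finset.mul_sum, Finset.mul_sum, ← Finset.sum_add_distrib]
  refine Finset.sum_le_sum fun i _ => ?_
  have h := (convexOn_rpow_of_nonpos hp).2 (hz.sub_castSucc_pos i)
    (hw.sub_castSucc_pos i) ha hb hab
  simp only [smul_eq_mul] at h
  convert h using 2
  ring

lemma strictConvexOn_discreteEnergy {a b p : ℝ} (ha : 0 < a) (hb : 0 ≤ b) (hp : p ≤ 0)
    (xhat : Fin (n + 1) → ℝ) :
    StrictConvexOn ℝ {z | StrictMono z} (discreteEnergy a b p xhat) :=
  ((strictConvexOn_const_mul_sum_sq_sub ha xhat).subset (subset_univ _)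
    convex_setOf_strictMono).add_convexOn ((convexOn_sum_rpow_sub_castSucc hp).smul hb)

lemma continuousOn_discreteEnergy (a b p : ℝ) (xhat : Fin (n + 1) → ℝ) :
    ContinuousOn (discreteEnergy a b p xhat) {z | StrictMono z} := by
  refine (Continuous.continuousOn (by fun_prop)).add
    (continuousOn_const.mul (continuousOn_finsetSum _ fun i _ => ?_))
  exact (Continuous.continuousOn (by fun_prop)).rpow_const
    fun z hz => Or.inl (hz.sub_castSucc_pos i).ne'

variable {a b p : ℝ} (xhat : Fin (n + 1) → ℝ)

lemma mul_sq_sub_le_discreteEnergy (ha : 0 ≤ a) (hb : 0 ≤ b) {z : Fin (n + 1) → ℝ}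
    (hz : StrictMono z) (i : Fin (n + 1)) :
    a * (z i - xhat i) ^ 2 ≤ discreteEnergy a b p xhat z := by
  have hsq : a * (z i - xhat i) ^ 2 ≤ a * ∑ j, (z j - xhat j) ^ 2 :=
    mul_le_mul_of_nonneg_left
      (Finset.single_le_sum (fun j _ => sq_nonneg (z j - xhat j)) (Finset.mem_univ i)) ha
  have hgaps : 0 ≤ b * ∑ j : Fin n, (z j.succ - z j.castSucc) ^ p :=
    mul_nonneg hb (Finset.sum_nonneg fun j _ => (rpow_pos_of_pos (hz.sub_castSucc_pos j) p).le)
  rw [discreteEnergy]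
  linarith

lemma mul_rpow_sub_castSucc_le_discreteEnergy (ha : 0 ≤ a) (hb : 0 ≤ b)
    {z : Fin (n + 1) → ℝ} (hz : StrictMono z) (i : Fin n) :
    b * (z i.succ - z i.castSucc) ^ p ≤ discreteEnergy a b p xhat z := by
  have hgap :
      b * (z i.succ - z i.castSucc) ^ p ≤ b * ∑ j : Fin n, (z j.succ - z j.castSucc) ^ p :=
    mul_le_mul_of_nonneg_left (Finset.single_le_sum
      (fun j _ => (rpow_pos_of_pos (hz.sub_castSucc_pos j) p).le) (Finset.mem_univ i)) hb
  have hsq : 0 ≤ a * ∑ j, (z j - xhat j) ^ 2 :=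
    mul_nonneg ha (Finset.sum_nonneg fun j _ => sq_nonneg _)
  rw [discreteEnergy]
  linarith

def boundedSpacedConfigs (B ε : ℝ) : Set (Fin (n + 1) → ℝ) :=
  {z | (∀ i, |z i - xhat i| ≤ B) ∧ ∀ i : Fin n, ε ≤ z i.succ - z i.castSucc}

lemma isCompact_boundedSpacedConfigs (B ε : ℝ) : IsCompact (boundedSpacedConfigs xhat B ε) := by
  refine Metric.isCompact_of_isClosed_isBounded ?_
    ((Metric.isBounded_closedBall (x := xhat) (r := B)).subset fun z hz => ?_)
  · simp only [boundedSpacedConfigs, ofPred_and, ofPred_forall]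
    exact (isClosed_iInter fun i => isClosed_le (by fun_prop) continuous_const).inter
      (isClosed_iInter fun i => isClosed_le continuous_const (by fun_prop))
  · rcases lt_or_ge B 0 with hB | hB
    · exact absurd ((abs_nonneg _).trans (hz.1 0)) hB.not_ge
    · exact (dist_pi_le_iff hB).mpr fun i => (Real.dist_eq _ _).trans_le (hz.1 i)

lemma boundedSpacedConfigs_subset_setOf_strictMono {B ε : ℝ} (hε : 0 < ε) :
    boundedSpacedConfigs xhat B ε ⊆ {z | StrictMono z} :=
  fun _ hz => Fin.strictMono_iff_lt_succ.mpr fun i => by linarith [hz.2 i]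

lemma mem_boundedSpacedConfigs_of_discreteEnergy_le (ha : 0 < a) (hb : 0 < b) (hp : p < 0)
    {c : ℝ} (hc : 0 < c) {z : Fin (n + 1) → ℝ} (hz : StrictMono z)
    (hzc : discreteEnergy a b p xhat z ≤ c) :
    z ∈ boundedSpacedConfigs xhat √(c / a) ((c / b) ^ p⁻¹) := by
  refine ⟨fun i => Real.abs_le_sqrt ?_, fun i => ?_⟩
  · rw [le_div_iff₀ ha, mul_comm]
    exact (mul_sq_sub_le_discreteEnergy xhat ha.le hb.le hz i).trans hzc
  · rw [rpow_inv_le_iff_of_neg (by positivity) (hz.sub_castSucc_pos i) hp, le_div_iff₀ hb,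
      mul_comm]
    exact (mul_rpow_sub_castSucc_le_discreteEnergy xhat ha.le hb.le hz i).trans hzc

lemma exists_isMinOn_discreteEnergy (ha : 0 < a) (hb : 0 < b) (hp : p < 0) :
    ∃ z ∈ {z : Fin (n + 1) → ℝ | StrictMono z},
      IsMinOn (discreteEnergy a b p xhat) {z | StrictMono z} z := by
  have hz₀ : StrictMono fun i : Fin (n + 1) => (i : ℝ) :=
    Nat.strictMono_cast.comp Fin.val_strictMono
  set c := discreteEnergy a b p xhat (fun i => (i : ℝ)) + 1 with hc_def
  have hc : 0 < c := by
    linarith [(mul_nonneg ha.le (sq_nonneg _)).trans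
      (mul_sq_sub_le_discreteEnergy xhat (p := p) ha.le hb.le hz₀ 0)]
  have hK := boundedSpacedConfigs_subset_setOf_strictMono xhat (B := √(c / a))
    (rpow_pos_of_pos (div_pos hc hb) p⁻¹)
  exact exists_isMinOn_of_isCompact_of_le_subset hz₀ (isCompact_boundedSpacedConfigs xhat _ _)
    hK ((continuousOn_discreteEnergy a b p xhat).mono hK) fun w hw hwz₀ =>
      mem_boundedSpacedConfigs_of_discreteEnergy_le xhat ha hb hp hc hw (by linarith)

end DiscreteEnergy

lemma internal_energy_eq {m d : ℝ} (γ : ℝ) (hm : 0 < m) (hd : 0 < d) :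
    1 / (γ - 1) * (m / d) ^ γ * d = m ^ γ / (γ - 1) * d ^ (1 - γ) := by
  rw [div_rpow hm.le hd.le, rpow_sub hd, rpow_one]
  field_simp

lemma sum_energy_eq_discreteEnergy {n : ℕ} (τ m γ : ℝ) (hm : 0 < m) (xhat : Fin (n + 1) → ℝ)
    {z : Fin (n + 1) → ℝ} (hz : StrictMono z) :
    ∑ i, 3 / (4 * τ ^ 2) * m * (z i - xhat i) ^ 2 +
        ∑ i : Fin n,
          1 / (γ - 1) * (m / (z i.succ - z i.castSucc)) ^ γ * (z i.succ - z i.castSucc)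
      = discreteEnergy (3 / (4 * τ ^ 2) * m) (m ^ γ / (γ - 1)) (1 - γ) xhat z := by
  simp only [discreteEnergy, Finset.mul_sum, internal_energy_eq γ hm (hz.sub_castSucc_pos _)]

/-- **Well-posedness of the discrete variational step.** For `N = n + 2 ≥ 2` particles, the
fully discrete energy
`F(z) = ∑ᵢ (3/(4τ²)) m (zᵢ - x̂ᵢ)² + ∑ᵢ (1/(γ-1)) (m/(zᵢ₊₁ - zᵢ))^γ (zᵢ₊₁ - zᵢ)`
attains its infimum over the open set of strictly increasing configurations, and the
minimizer is unique. -/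
theorem discrete_variational_step_wellposed (n : ℕ) (τ m γ : ℝ)
    (hτ : 0 < τ) (hm : 0 < m) (hγ : 1 < γ) (xhat : Fin (n + 2) → ℝ) :
    ∃! z : Fin (n + 2) → ℝ, StrictMono z ∧
      ∀ w : Fin (n + 2) → ℝ, StrictMono w →
        (∑ i, (3 / (4 * τ ^ 2)) * m * (z i - xhat i) ^ 2 +
            ∑ i : Fin (n + 1),
              (1 / (γ - 1)) * (m / (z i.succ - z i.castSucc)) ^ γ *
                (z i.succ - z i.castSucc)) ≤
          (∑ i, (3 / (4 * τ ^ 2)) * m * (w i - xhat i) ^ 2 +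
            ∑ i : Fin (n + 1),
              (1 / (γ - 1)) * (m / (w i.succ - w i.castSucc)) ^ γ *
                (w i.succ - w i.castSucc)) := by
  have ha : 0 < 3 / (4 * τ ^ 2) * m := by positivity
  have hb : 0 < m ^ γ / (γ - 1) := div_pos (rpow_pos_of_pos hm γ) (by linarith)
  have hp : 1 - γ < 0 := by linarith
  obtain ⟨z, hz, hzmin⟩ := exists_isMinOn_discreteEnergy xhat ha hb hp
  refine ⟨z, ⟨hz, fun w hw => ?_⟩, fun y ⟨hy, hymin⟩ => ?_⟩
  · rw [sum_energy_eq_discreteEnergy τ m γ hm xhat hz,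
      sum_energy_eq_discreteEnergy τ m γ hm xhat hw]
    exact hzmin hw
  · refine (strictConvexOn_discreteEnergy ha hb.le hp.le xhat).eq_of_isMinOn
      (fun w (hw : StrictMono w) => ?_) hzmin hy hz
    have hyw := hymin w hw
    rwa [sum_energy_eq_discreteEnergy τ m γ hm xhat hy,
      sum_energy_eq_discreteEnergy τ m γ hm xhat hw] at hyw
end

section
/- First variation inequality for the squared Wasserstein distance along transport perturbations: Let d ≥ 1, let μ and ν be Borel probability measures on ℝ^d with finite second moments, and let R : ℝ^d → ℝ^d be a Borel map with R#μ = ν and ∫_{ℝ^d} |R(x) − x|² dμ(x) = W(μ,ν)². Let ζ : ℝ^d → ℝ^d be smooth with compact support and, for ε ≥ 0, define ν_ε := ((id + εζ) ∘ R)#μ. Then limsup_{ε→0⁺} ( W(μ, ν_ε)² − W(μ,ν)² ) / ε ≤ 2 ∫_{ℝ^d} ζ(R(x)) · (R(x) − x) dμ(x). -/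
open MeasureTheory Filter
open scoped ENNReal Topology
open scoped NNReal

/-- The squared quadratic Wasserstein distance between two Borel measures on `ℝ^d`:
the infimum of the quadratic transport cost over all couplings, i.e. measures on the
product space whose marginals are `μ` and `ν`. -/
noncomputable def W2sq {d : ℕ} (μ ν : Measure (EuclideanSpace ℝ (Fin d))) : ℝ≥0∞ :=
  ⨅ (γ : Measure (EuclideanSpace ℝ (Fin d) × EuclideanSpace ℝ (Fin d)))
    (_ : γ.map Prod.fst = μ) (_ : γ.map Prod.snd = ν),
    ∫⁻ p, ENNReal.ofReal (‖p.1 - p.2‖ ^ 2) ∂γ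

lemma W2sq_le_map {d : ℕ} (μ : Measure (EuclideanSpace ℝ (Fin d)))
    (F : EuclideanSpace ℝ (Fin d) → EuclideanSpace ℝ (Fin d)) (hF : Measurable F) :
    W2sq μ (μ.map F) ≤ ∫⁻ x, ENNReal.ofReal (‖x - F x‖ ^ 2) ∂μ := by
  have hm : Measurable fun x => (x, F x) := measurable_id.prodMk hF
  have h1 : (μ.map fun x => (x, F x)).map Prod.fst = μ := by
    rw [Measure.map_map measurable_fst hm]; exact Measure.map_id
  have h2 : (μ.map fun x => (x, F x)).map Prod.snd = μ.map F := by
    rw [Measure.map_map measurable_snd hm]; rfl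
  refine le_trans (iInf_le_of_le (μ.map fun x => (x, F x))
    (iInf_le_of_le h1 (iInf_le_of_le h2 le_rfl))) ?_
  rw [lintegral_map (by
    exact ((measurable_fst.sub measurable_snd).norm.pow_const 2).ennreal_ofReal) hm]

lemma hexp_aux {d : ℕ} (a b : EuclideanSpace ℝ (Fin d)) (ε : ℝ) :
    ‖a + ε • b‖ ^ 2 = ‖a‖ ^ 2 + ε * (2 * (inner ℝ b a : ℝ)) + ε ^ 2 * ‖b‖ ^ 2 := by
  rw [norm_add_sq_real, real_inner_smul_right, norm_smul, real_inner_comm]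
  simp [mul_pow, Real.norm_eq_abs, sq_abs]
  ring

lemma exists_homeo {d : ℕ} (hd : 1 ≤ d) (ζ : EuclideanSpace ℝ (Fin d) → EuclideanSpace ℝ (Fin d))
    {L : ℝ≥0} (hLip : LipschitzWith L ζ) {ε : ℝ} (hε : 0 ≤ ε) (hεL : ε * L < 1) :
    ∃ e : (EuclideanSpace ℝ (Fin d)) ≃ₜ (EuclideanSpace ℝ (Fin d)),
      ∀ x, e x = x + ε • ζ x := by
  haveI : Nontrivial (EuclideanSpace ℝ (Fin d)) := by
    apply Module.nontrivial_of_finrank_pos (R := ℝ)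
    rw [finrank_euclideanSpace_fin]
    omega
  have hcoe : ((ε.toNNReal * L : ℝ≥0) : ℝ) = ε * L := by
    simp [Real.coe_toNNReal _ hε]
  have happ : ApproximatesLinearOn (fun y => y + ε • ζ y)
      ((ContinuousLinearEquiv.refl ℝ (EuclideanSpace ℝ (Fin d)) :
        (EuclideanSpace ℝ (Fin d)) ≃L[ℝ] (EuclideanSpace ℝ (Fin d))) :
        (EuclideanSpace ℝ (Fin d)) →L[ℝ] (EuclideanSpace ℝ (Fin d))) Set.univ
      (ε.toNNReal * L) := by
    intro x _ y _
    have hxy : (x + ε • ζ x) - (y + ε • ζ y) -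
        ((ContinuousLinearEquiv.refl ℝ (EuclideanSpace ℝ (Fin d)) :
          (EuclideanSpace ℝ (Fin d)) →L[ℝ] (EuclideanSpace ℝ (Fin d))) (x - y))
        = ε • (ζ x - ζ y) := by
      simp only [ContinuousLinearEquiv.coe_refl, ContinuousLinearMap.id_apply, smul_sub]
      abel
    rw [hxy, norm_smul, hcoe]
    have := hLip.dist_le_mul x y
    rw [dist_eq_norm, dist_eq_norm] at this
    calc ‖ε‖ * ‖ζ x - ζ y‖ ≤ ε * (L * ‖x - y‖) := by
          rw [Real.norm_of_nonneg hε]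
          exact mul_le_mul_of_nonneg_left this hε
      _ = ε * L * ‖x - y‖ := by ring
  have hc : (ε.toNNReal * L) <
      (‖(((ContinuousLinearEquiv.refl ℝ (EuclideanSpace ℝ (Fin d))).symm :
        (EuclideanSpace ℝ (Fin d)) →L[ℝ] (EuclideanSpace ℝ (Fin d))))‖₊)⁻¹ := by
    simp only [ContinuousLinearEquiv.refl_symm, ContinuousLinearEquiv.coe_refl,
      ContinuousLinearMap.nnnorm_id, inv_one]
    rw [← NNReal.coe_lt_coe, hcoe]
    exact hεL
  exact ⟨happ.toHomeomorph _ (Or.inr hc), fun x => rfl⟩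

lemma W2sq_lower {d : ℕ} (hd : 1 ≤ d) (μ ν : Measure (EuclideanSpace ℝ (Fin d)))
    [IsProbabilityMeasure μ]
    (R : EuclideanSpace ℝ (Fin d) → EuclideanSpace ℝ (Fin d))
    (hR : Measurable R) (hmap : μ.map R = ν)
    (ζ : EuclideanSpace ℝ (Fin d) → EuclideanSpace ℝ (Fin d)) (hζm : Measurable ζ)
    {L : ℝ≥0} (hLip : LipschitzWith L ζ) {M : ℝ} (hM : ∀ y, ‖ζ y‖ ≤ M)
    {ε : ℝ} (hε : 0 < ε) (hεL : ε * L < 1) :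
    W2sq μ ν ≤ ENNReal.ofReal (1 + ε) * W2sq μ (μ.map fun x => R x + ε • ζ (R x))
      + ENNReal.ofReal ((ε ^ 2 + ε) * M ^ 2) := by
  obtain ⟨e, he⟩ := exists_homeo hd ζ hLip hε.le hεL
  have hM0 : 0 ≤ M := le_trans (norm_nonneg _) (hM 0)
  have hTm : Measurable (⇑e.symm) := e.symm.continuous.measurable
  have hFm : Measurable fun x => R x + ε • ζ (R x) := hR.add ((hζm.comp hR).const_smul ε)
  have key : ∀ γ : Measure (EuclideanSpace ℝ (Fin d) × EuclideanSpace ℝ (Fin d)),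
      γ.map Prod.fst = μ → γ.map Prod.snd = μ.map (fun x => R x + ε • ζ (R x)) →
      W2sq μ ν ≤ ENNReal.ofReal (1 + ε) * (∫⁻ p, ENNReal.ofReal (‖p.1 - p.2‖ ^ 2) ∂γ)
        + ENNReal.ofReal ((ε ^ 2 + ε) * M ^ 2) := by
    intro γ h1 h2
    haveI : IsProbabilityMeasure γ := by
      constructor
      have h := congrArg (fun m : Measure (EuclideanSpace ℝ (Fin d)) => m Set.univ) h1
      simp only [Measure.map_apply measurable_fst MeasurableSet.univ, Set.preimage_univ] at h
      rw [h]; exact measure_univ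
    have hm' : Measurable fun p : EuclideanSpace ℝ (Fin d) × EuclideanSpace ℝ (Fin d) =>
        (p.1, e.symm p.2) := measurable_fst.prodMk (hTm.comp measurable_snd)
    have hm1 : (γ.map fun p : EuclideanSpace ℝ (Fin d) × EuclideanSpace ℝ (Fin d) =>
        (p.1, e.symm p.2)).map Prod.fst = μ := by
      rw [Measure.map_map measurable_fst hm']
      exact h1
    have hm2 : (γ.map fun p : EuclideanSpace ℝ (Fin d) × EuclideanSpace ℝ (Fin d) =>
        (p.1, e.symm p.2)).map Prod.snd = ν := by
      rw [Measure.map_map measurable_snd hm']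
      have hcomp : (Prod.snd ∘ fun p : EuclideanSpace ℝ (Fin d) × EuclideanSpace ℝ (Fin d) =>
          (p.1, e.symm p.2)) = (⇑e.symm) ∘ Prod.snd := rfl
      rw [hcomp, ← Measure.map_map hTm measurable_snd, h2, Measure.map_map hTm hFm]
      have hTF : (⇑e.symm ∘ fun x => R x + ε • ζ (R x)) = R := by
        funext x
        rw [Function.comp_apply, ← he (R x)]
        exact e.symm_apply_apply (R x)
      rw [hTF, hmap]
    have hcost : W2sq μ ν ≤ ∫⁻ p, ENNReal.ofReal (‖p.1 - p.2‖ ^ 2)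
        ∂(γ.map fun p : EuclideanSpace ℝ (Fin d) × EuclideanSpace ℝ (Fin d) =>
          (p.1, e.symm p.2)) :=
      iInf_le_of_le _ (iInf_le_of_le hm1 (iInf_le_of_le hm2 le_rfl))
    rw [lintegral_map (f := fun p : EuclideanSpace ℝ (Fin d) × EuclideanSpace ℝ (Fin d) =>
      ENNReal.ofReal (‖p.1 - p.2‖ ^ 2)) (((measurable_fst.sub measurable_snd).norm.pow_const 2).ennreal_ofReal)
      hm'] at hcost
    refine hcost.trans ?_
    have hpt : ∀ p : EuclideanSpace ℝ (Fin d) × EuclideanSpace ℝ (Fin d),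
        ENNReal.ofReal (‖p.1 - e.symm p.2‖ ^ 2)
        ≤ ENNReal.ofReal ((1 + ε) * ‖p.1 - p.2‖ ^ 2) + ENNReal.ofReal ((ε ^ 2 + ε) * M ^ 2) := by
      intro p
      rw [← ENNReal.ofReal_add (by positivity) (by positivity)]
      apply ENNReal.ofReal_le_ofReal
      have h2' : p.2 - e.symm p.2 = ε • ζ (e.symm p.2) := by
        have hp : p.2 = e.symm p.2 + ε • ζ (e.symm p.2) := by
          conv_lhs => rw [← e.apply_symm_apply p.2]
          rw [he (e.symm p.2)]
        nth_rewrite 1 [hp]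
        abel
      have h1' : ‖p.1 - e.symm p.2‖ ≤ ‖p.1 - p.2‖ + ε * M := by
        have hdecomp : p.1 - e.symm p.2 = (p.1 - p.2) + (p.2 - e.symm p.2) := by abel
        rw [hdecomp, h2']
        refine (norm_add_le _ _).trans ?_
        rw [norm_smul, Real.norm_of_nonneg hε.le]
        exact add_le_add le_rfl (mul_le_mul_of_nonneg_left (hM _) hε.le)
      have hnn : (0:ℝ) ≤ ‖p.1 - p.2‖ := norm_nonneg _
      have hnn2 : (0:ℝ) ≤ ‖p.1 - e.symm p.2‖ := norm_nonneg _
      nlinarith [sq_nonneg (‖p.1 - p.2‖ - M), mul_nonneg hε.le hM0, hε.le,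
        mul_le_mul h1' h1' hnn2 (by positivity : (0:ℝ) ≤ ‖p.1 - p.2‖ + ε * M),
        mul_nonneg (mul_nonneg hε.le hε.le) (sq_nonneg M)]
    calc ∫⁻ p, ENNReal.ofReal (‖p.1 - e.symm p.2‖ ^ 2) ∂γ
        ≤ ∫⁻ p, (ENNReal.ofReal ((1 + ε) * ‖p.1 - p.2‖ ^ 2)
            + ENNReal.ofReal ((ε ^ 2 + ε) * M ^ 2)) ∂γ := lintegral_mono hpt
      _ = ∫⁻ p, ENNReal.ofReal ((1 + ε) * ‖p.1 - p.2‖ ^ 2) ∂γ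
            + ENNReal.ofReal ((ε ^ 2 + ε) * M ^ 2) := by
          rw [lintegral_add_right _ measurable_const, lintegral_const, measure_univ, mul_one]
      _ = ENNReal.ofReal (1 + ε) * (∫⁻ p, ENNReal.ofReal (‖p.1 - p.2‖ ^ 2) ∂γ)
            + ENNReal.ofReal ((ε ^ 2 + ε) * M ^ 2) := by
          congr 1
          simp_rw [ENNReal.ofReal_mul (by positivity : (0:ℝ) ≤ 1 + ε)]
          rw [lintegral_const_mul _ (f := fun p : EuclideanSpace ℝ (Fin d) × EuclideanSpace ℝ (Fin d) =>
              ENNReal.ofReal (‖p.1 - p.2‖ ^ 2))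
            (((measurable_fst.sub measurable_snd).norm.pow_const 2).ennreal_ofReal)]
  rcases eq_or_ne (W2sq μ (μ.map fun x => R x + ε • ζ (R x))) ∞ with htop | hfin
  · rw [htop, ENNReal.mul_top (by simp [ENNReal.ofReal_eq_zero]; linarith)]
    exact le_top.trans (le_add_right le_rfl)
  · refine ENNReal.le_of_forall_pos_le_add fun δ hδ _ => ?_
    have hc0 : ENNReal.ofReal (1 + ε) ≠ 0 := by simp [ENNReal.ofReal_eq_zero]; linarith
    have hcT : ENNReal.ofReal (1 + ε) ≠ ∞ := ENNReal.ofReal_ne_top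
    have hδ'pos : (ENNReal.ofReal (1 + ε))⁻¹ * (δ : ℝ≥0∞) ≠ 0 := by
      simp only [ne_eq, mul_eq_zero, ENNReal.inv_eq_zero, not_or]
      exact ⟨hcT, by exact_mod_cast hδ.ne'⟩
    have hlt : W2sq μ (μ.map fun x => R x + ε • ζ (R x))
        < W2sq μ (μ.map fun x => R x + ε • ζ (R x))
          + (ENNReal.ofReal (1 + ε))⁻¹ * (δ : ℝ≥0∞) :=
      ENNReal.lt_add_right hfin hδ'pos
    rw [show W2sq μ (μ.map fun x => R x + ε • ζ (R x)) = ⨅ (γ : Measure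
        (EuclideanSpace ℝ (Fin d) × EuclideanSpace ℝ (Fin d)))
        (_ : γ.map Prod.fst = μ) (_ : γ.map Prod.snd = μ.map fun x => R x + ε • ζ (R x)),
        ∫⁻ p, ENNReal.ofReal (‖p.1 - p.2‖ ^ 2) ∂γ from rfl] at hlt
    obtain ⟨γ, hγ⟩ := iInf_lt_iff.mp hlt
    obtain ⟨hγ1, hγ⟩ := iInf_lt_iff.mp hγ
    obtain ⟨hγ2, hγ⟩ := iInf_lt_iff.mp hγ
    calc W2sq μ ν ≤ ENNReal.ofReal (1 + ε) * (∫⁻ p, ENNReal.ofReal (‖p.1 - p.2‖ ^ 2) ∂γ)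
          + ENNReal.ofReal ((ε ^ 2 + ε) * M ^ 2) := key γ hγ1 hγ2
      _ ≤ ENNReal.ofReal (1 + ε) * (W2sq μ (μ.map fun x => R x + ε • ζ (R x))
            + (ENNReal.ofReal (1 + ε))⁻¹ * (δ : ℝ≥0∞))
          + ENNReal.ofReal ((ε ^ 2 + ε) * M ^ 2) := by gcongr; exact hγ.le
      _ = ENNReal.ofReal (1 + ε) * W2sq μ (μ.map fun x => R x + ε • ζ (R x))
            + ENNReal.ofReal ((ε ^ 2 + ε) * M ^ 2) + (δ : ℝ≥0∞) := by
          rw [mul_add, ← mul_assoc, ENNReal.mul_inv_cancel hc0 hcT, one_mul]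
          ring


set_option maxHeartbeats 1000000 in
/-- **First variation inequality for the squared Wasserstein distance along transport
perturbations.** If `R` is an optimal transport map from `μ` to `ν` and
`ν_ε = ((id + εζ) ∘ R)#μ`, then
`limsup_{ε→0⁺} (W(μ,ν_ε)² - W(μ,ν)²)/ε ≤ 2 ∫ ζ(R(x)) · (R(x) - x) dμ`. -/
theorem wasserstein_first_variation_inequality (d : ℕ) (hd : 1 ≤ d)
    (μ ν : Measure (EuclideanSpace ℝ (Fin d)))
    [IsProbabilityMeasure μ] [IsProbabilityMeasure ν]
    (hμmom : Integrable (fun x => ‖x‖ ^ 2) μ) (hνmom : Integrable (fun x => ‖x‖ ^ 2) ν)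
    (R : EuclideanSpace ℝ (Fin d) → EuclideanSpace ℝ (Fin d))
    (hR : Measurable R) (hmap : μ.map R = ν)
    (hRint : Integrable (fun x => ‖R x - x‖ ^ 2) μ)
    (hopt : ENNReal.ofReal (∫ x, ‖R x - x‖ ^ 2 ∂μ) = W2sq μ ν)
    (ζ : EuclideanSpace ℝ (Fin d) → EuclideanSpace ℝ (Fin d))
    (hζ : ContDiff ℝ (⊤ : ℕ∞) ζ) (hζc : HasCompactSupport ζ) :
    Filter.limsup (fun ε : ℝ =>
        ((W2sq μ (μ.map fun x => R x + ε • ζ (R x))).toReal - (W2sq μ ν).toReal) / ε)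
      (𝓝[>] 0) ≤
      2 * ∫ x, (inner ℝ (ζ (R x)) (R x - x) : ℝ) ∂μ := by
  obtain ⟨M, hM⟩ := hζc.exists_bound_of_continuous hζ.continuous
  have hM0 : 0 ≤ M := le_trans (norm_nonneg _) (hM 0)
  obtain ⟨L, hLip⟩ := hζ.lipschitzWith_of_hasCompactSupport hζc (by simp)
  have hζm : Measurable ζ := hζ.continuous.measurable
  have hsub : Measurable fun x : EuclideanSpace ℝ (Fin d) => R x - x := hR.sub measurable_id
  set A := ∫ x, ‖R x - x‖ ^ 2 ∂μ with hAdef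
  set B := ∫ x, (inner ℝ (ζ (R x)) (R x - x) : ℝ) ∂μ with hBdef
  set C := ∫ x, ‖ζ (R x)‖ ^ 2 ∂μ with hCdef
  have hA0 : 0 ≤ A := integral_nonneg fun x => by positivity
  have htoA : (W2sq μ ν).toReal = A := by rw [← hopt, ENNReal.toReal_ofReal hA0]
  have hmeasB : Measurable fun x => (inner ℝ (ζ (R x)) (R x - x) : ℝ) := (hζm.comp hR).inner hsub
  have hint_norm : Integrable (fun x => ‖R x - x‖) μ := by
    refine ((integrable_const (1:ℝ)).add hRint).mono' hsub.norm.aestronglyMeasurable ?_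
    filter_upwards with x
    rw [norm_norm]
    simp only [Pi.add_apply]
    nlinarith [sq_nonneg (‖R x - x‖ - 1), norm_nonneg (R x - x)]
  have hintB : Integrable (fun x => (inner ℝ (ζ (R x)) (R x - x) : ℝ)) μ := by
    refine (hint_norm.const_mul M).mono' hmeasB.aestronglyMeasurable ?_
    filter_upwards with x
    rw [Real.norm_eq_abs]
    exact (abs_real_inner_le_norm _ _).trans
      (mul_le_mul_of_nonneg_right (hM _) (norm_nonneg _))
  have hintC : Integrable (fun x => ‖ζ (R x)‖ ^ 2) μ := by
    refine (integrable_const (M ^ 2)).mono'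
      ((hζm.comp hR).norm.pow_const 2).aestronglyMeasurable ?_
    filter_upwards with x
    rw [Real.norm_of_nonneg (by positivity)]
    exact pow_le_pow_left₀ (norm_nonneg _) (hM _) 2
  have hexp : ∀ ε : ℝ, (fun x => ‖(R x + ε • ζ (R x)) - x‖ ^ 2)
      = fun x => ‖R x - x‖ ^ 2 + ε * (2 * (inner ℝ (ζ (R x)) (R x - x) : ℝ))
        + ε ^ 2 * ‖ζ (R x)‖ ^ 2 := by
    intro ε; funext x
    rw [add_sub_right_comm, hexp_aux]
  have hint2 : ∀ ε : ℝ, Integrable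
      (fun x => ε * (2 * (inner ℝ (ζ (R x)) (R x - x) : ℝ))) μ :=
    fun ε => (hintB.const_mul 2).const_mul ε
  have hint3 : ∀ ε : ℝ, Integrable (fun x => ε ^ 2 * ‖ζ (R x)‖ ^ 2) μ :=
    fun ε => hintC.const_mul (ε ^ 2)
  have hint12 : ∀ ε : ℝ, Integrable
      (fun x => ‖R x - x‖ ^ 2 + ε * (2 * (inner ℝ (ζ (R x)) (R x - x) : ℝ))) μ :=
    fun ε => hRint.add (hint2 ε)
  have hintF : ∀ ε : ℝ, Integrable (fun x => ‖(R x + ε • ζ (R x)) - x‖ ^ 2) μ := by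
    intro ε; rw [hexp ε]
    exact (hint12 ε).add (hint3 ε)
  have hIeq : ∀ ε : ℝ, ∫ x, ‖(R x + ε • ζ (R x)) - x‖ ^ 2 ∂μ = A + ε * (2 * B) + ε ^ 2 * C := by
    intro ε
    rw [hexp ε, integral_add (hint12 ε) (hint3 ε), integral_add hRint (hint2 ε),
      integral_const_mul, integral_const_mul, integral_const_mul]
  have hub : ∀ ε : ℝ, W2sq μ (μ.map fun x => R x + ε • ζ (R x))
      ≤ ENNReal.ofReal (A + ε * (2 * B) + ε ^ 2 * C) := by
    intro ε
    have hFm : Measurable fun x => R x + ε • ζ (R x) := hR.add ((hζm.comp hR).const_smul ε)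
    refine (W2sq_le_map μ _ hFm).trans (le_of_eq ?_)
    have hnn : 0 ≤ᵐ[μ] fun x => ‖(R x + ε • ζ (R x)) - x‖ ^ 2 :=
      Filter.Eventually.of_forall fun x => by positivity
    calc ∫⁻ x, ENNReal.ofReal (‖x - (R x + ε • ζ (R x))‖ ^ 2) ∂μ
        = ∫⁻ x, ENNReal.ofReal (‖(R x + ε • ζ (R x)) - x‖ ^ 2) ∂μ := by
          simp_rw [norm_sub_rev]
      _ = ENNReal.ofReal (∫ x, ‖(R x + ε • ζ (R x)) - x‖ ^ 2 ∂μ) :=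
          (ofReal_integral_eq_lintegral_ofReal (hintF ε) hnn).symm
      _ = ENNReal.ofReal (A + ε * (2 * B) + ε ^ 2 * C) := by rw [hIeq ε]
  have hWne : ∀ ε : ℝ, W2sq μ (μ.map fun x => R x + ε • ζ (R x)) ≠ ∞ :=
    fun ε => ((hub ε).trans_lt ENNReal.ofReal_lt_top).ne
  have hWr : ∀ ε : ℝ, (W2sq μ (μ.map fun x => R x + ε • ζ (R x))).toReal
      ≤ A + ε * (2 * B) + ε ^ 2 * C := by
    intro ε
    refine ENNReal.toReal_le_of_le_ofReal ?_ (hub ε)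
    rw [← hIeq ε]
    exact integral_nonneg fun x => by positivity
  set ε₀ : ℝ := min 1 ((L : ℝ) + 1)⁻¹ with hε₀def
  have hε₀pos : 0 < ε₀ := lt_min one_pos (by positivity)
  set K : ℝ := A + (|2 * B| + |C|) + 2 * M ^ 2 with hKdef
  have hlow : ∀ ε : ℝ, 0 < ε → ε < ε₀ →
      -K ≤ ((W2sq μ (μ.map fun x => R x + ε • ζ (R x))).toReal - A) / ε := by
    intro ε hε hεlt
    have hε1 : ε ≤ 1 := (lt_of_lt_of_le hεlt (min_le_left _ _)).le
    have hL1 : (0:ℝ) < (L : ℝ) + 1 := by positivity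
    have hεL : ε * (L : ℝ) < 1 := by
      have h2 : ε < ((L : ℝ) + 1)⁻¹ := lt_of_lt_of_le hεlt (min_le_right _ _)
      calc ε * (L : ℝ) ≤ ε * ((L : ℝ) + 1) := by nlinarith
        _ < ((L : ℝ) + 1)⁻¹ * ((L : ℝ) + 1) := mul_lt_mul_of_pos_right h2 hL1
        _ = 1 := inv_mul_cancel₀ hL1.ne'
    have hlb := W2sq_lower hd μ ν R hR hmap ζ hζm hLip hM hε hεL
    rw [← hopt] at hlb
    set Wε := W2sq μ (μ.map fun x => R x + ε • ζ (R x)) with hWεdef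
    have hmulne : ENNReal.ofReal (1 + ε) * Wε ≠ ∞ :=
      ENNReal.mul_ne_top ENNReal.ofReal_ne_top (hWne ε)
    have hreal : A ≤ (1 + ε) * Wε.toReal + (ε ^ 2 + ε) * M ^ 2 := by
      have h1 := ENNReal.toReal_mono
        (by exact ENNReal.add_ne_top.mpr ⟨hmulne, ENNReal.ofReal_ne_top⟩) hlb
      rwa [ENNReal.toReal_ofReal hA0, ENNReal.toReal_add hmulne ENNReal.ofReal_ne_top,
        ENNReal.toReal_mul, ENNReal.toReal_ofReal (by linarith),
        ENNReal.toReal_ofReal (by positivity)] at h1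
    have hWub : Wε.toReal ≤ A + (|2 * B| + |C|) := by
      refine (hWr ε).trans ?_
      have h1 : ε * (2 * B) ≤ |2 * B| := by
        calc ε * (2 * B) ≤ ε * |2 * B| := by
              exact mul_le_mul_of_nonneg_left (le_abs_self _) hε.le
          _ ≤ 1 * |2 * B| := mul_le_mul_of_nonneg_right hε1 (abs_nonneg _)
          _ = |2 * B| := one_mul _
      have h2 : ε ^ 2 * C ≤ |C| := by
        calc ε ^ 2 * C ≤ ε ^ 2 * |C| := mul_le_mul_of_nonneg_left (le_abs_self _) (by positivity)
          _ ≤ 1 * |C| := mul_le_mul_of_nonneg_right (by nlinarith) (abs_nonneg C)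
          _ = |C| := one_mul _
      linarith
    have hWnn : 0 ≤ Wε.toReal := ENNReal.toReal_nonneg
    rw [le_div_iff₀ hε]
    have hεsq : ε ^ 2 ≤ ε := by nlinarith
    have hKε : (ε ^ 2 + ε) * M ^ 2 ≤ 2 * ε * M ^ 2 := by nlinarith [sq_nonneg M]
    nlinarith [mul_le_mul_of_nonneg_left hWub hε.le]
  have hmem : Set.Ioo (0:ℝ) ε₀ ∈ 𝓝[>] (0:ℝ) :=
    Ioo_mem_nhdsGT_of_mem ⟨le_refl 0, hε₀pos⟩
  have hfu : ∀ᶠ ε in 𝓝[>] (0:ℝ),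
      ((W2sq μ (μ.map fun x => R x + ε • ζ (R x))).toReal - (W2sq μ ν).toReal) / ε
        ≤ 2 * B + ε * C := by
    filter_upwards [self_mem_nhdsWithin] with ε hεpos
    have hε : (0:ℝ) < ε := hεpos
    rw [htoA, div_le_iff₀ hε]
    nlinarith [hWr ε]
  have hfl : ∀ᶠ ε in 𝓝[>] (0:ℝ),
      -K ≤ ((W2sq μ (μ.map fun x => R x + ε • ζ (R x))).toReal - (W2sq μ ν).toReal) / ε := by
    filter_upwards [hmem] with ε hε
    rw [htoA]
    exact hlow ε hε.1 hε.2
  have hgt : Tendsto (fun ε : ℝ => 2 * B + ε * C) (𝓝[>] (0:ℝ)) (𝓝 (2 * B)) := by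
    have hcont : Continuous fun ε : ℝ => 2 * B + ε * C :=
      continuous_const.add (continuous_id.mul continuous_const)
    have h := (hcont.tendsto 0).mono_left (nhdsWithin_le_nhds (s := Set.Ioi (0:ℝ)))
    simpa using h
  have hcob : Filter.IsCoboundedUnder (· ≤ ·) (𝓝[>] (0:ℝ)) (fun ε : ℝ =>
      ((W2sq μ (μ.map fun x => R x + ε • ζ (R x))).toReal - (W2sq μ ν).toReal) / ε) :=
    Filter.IsBoundedUnder.isCoboundedUnder_le ⟨-K, Filter.eventually_map.mpr hfl⟩
  have hle := Filter.limsup_le_limsup hfu hcob hgt.isBoundedUnder_le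
  rwa [hgt.limsup_eq] at hle
end

section
/- Weak Euler–Lagrange equation (discrete Darcy law) for the minimizing movement step: Let d ≥ 1, γ > 1, τ > 0, and set U(r) := r^γ/(γ−1), P(r) := r^γ. Let ρⁿ and ρ* be Borel probability densities on ℝ^d with finite second moments and with ∫(ρⁿ)^γ < ∞ and ∫(ρ*)^γ < ∞. Assume that ρ* minimizes ρ ↦ (1/(2τ)) W(ρⁿ·Lebesgue, ρ·Lebesgue)² + ∫_{ℝ^d} U(ρ(z)) dz over all Borel probability densities ρ on ℝ^d with finite second moment, and that R = ∇φ for some convex function φ : ℝ^d → ℝ satisfies R#(ρⁿ·Lebesgue) = ρ*·Lebesgue and ∫_{ℝ^d} |R(x) − x|² ρⁿ(x) dx = W(ρⁿ·Lebesgue, ρ*·Lebesgue)². Then for every smooth compactly supported vector field ζ : ℝ^d → ℝ^d, (1/τ) ∫_{ℝ^d} ζ(R(x)) · (R(x) − x) ρⁿ(x) dx = ∫_{ℝ^d} P(ρ*(z)) (div ζ)(z) dz. -/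
open MeasureTheory
open scoped ENNReal NNReal

namespace DarcyAux


variable {d : ℕ}

local notation "E" => EuclideanSpace ℝ (Fin d)

/-- divergence-type sum -/
noncomputable def trsum (A : (EuclideanSpace ℝ (Fin d)) →L[ℝ] (EuclideanSpace ℝ (Fin d))) : ℝ :=
  ∑ j, A (EuclideanSpace.single j 1) j

noncomputable def detF (d : ℕ) :
    ((EuclideanSpace ℝ (Fin d)) →L[ℝ] (EuclideanSpace ℝ (Fin d))) → ℝ := fun L => L.det

lemma detF_apply (L : (EuclideanSpace ℝ (Fin d)) →L[ℝ] (EuclideanSpace ℝ (Fin d))) :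
    detF d L = L.det := rfl

lemma exists_poly_det (A : E →L[ℝ] E) :
    ∃ q : Polynomial ℝ, ∀ t : ℝ,
      detF d (1 + t • A) = 1 + trsum A * t + q.eval t * t ^ 2 := by
  classical
  set b := (EuclideanSpace.basisFun (Fin d) ℝ).toBasis with hb
  set M := LinearMap.toMatrix b b (A : E →ₗ[ℝ] E) with hM
  have key : ∀ t : ℝ, detF d (1 + t • A) = (1 + t • M).det := by
    intro t
    have h1 : ((1 + t • A : E →L[ℝ] E) : E →ₗ[ℝ] E)
        = (LinearMap.id : E →ₗ[ℝ] E) + t • (A : E →ₗ[ℝ] E) := by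
      ext x
      simp
    have : detF d (1 + t • A) = LinearMap.det ((1 + t • A : E →L[ℝ] E) : E →ₗ[ℝ] E) := rfl
    rw [this, h1, ← LinearMap.det_toMatrix b]
    congr 1
    rw [map_add, (LinearMap.toMatrix b b).map_smul, LinearMap.toMatrix_id, ← hM]
  have htr : M.trace = trsum A := by
    simp only [Matrix.trace, Matrix.diag, hM, LinearMap.toMatrix_apply, trsum, hb,
      OrthonormalBasis.coe_toBasis_repr_apply, OrthonormalBasis.coe_toBasis,
      EuclideanSpace.basisFun_apply, EuclideanSpace.basisFun_repr]
    rfl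
  refine ⟨(1 + (Polynomial.X : Polynomial ℝ) • M.map ⇑Polynomial.C).det.divX.divX, fun t => ?_⟩
  rw [key t, Matrix.det_one_add_smul, htr]

lemma contDiff_detF : ContDiff ℝ (⊤ : ℕ∞) (detF d) := by
  classical
  have hrw : detF d = fun L : E →L[ℝ] E =>
      ∑ σ : Equiv.Perm (Fin d), ((Equiv.Perm.sign σ : ℤ) : ℝ) *
        ∏ i, L ((EuclideanSpace.basisFun (Fin d) ℝ).toBasis i) (σ i) := by
    funext L
    set b := (EuclideanSpace.basisFun (Fin d) ℝ).toBasis with hb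
    have : detF d L = ((LinearMap.toMatrix b b) (L : E →ₗ[ℝ] E)).det :=
      (LinearMap.det_toMatrix b _).symm
    rw [this, Matrix.det_apply']
    apply Finset.sum_congr rfl
    intro σ _
    congr 1
    apply Finset.prod_congr rfl
    intro i _
    rw [LinearMap.toMatrix_apply]
    simp [hb, OrthonormalBasis.coe_toBasis_repr_apply, OrthonormalBasis.coe_toBasis]
  rw [hrw]
  apply ContDiff.sum
  intro σ _
  apply ContDiff.mul contDiff_const
  have : (fun L : E →L[ℝ] E => ∏ i, L ((EuclideanSpace.basisFun (Fin d) ℝ).toBasis i) (σ i))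
      = fun L => ∏ i ∈ Finset.univ, (fun L' : E →L[ℝ] E =>
          ((EuclideanSpace.proj (σ i)).comp
            (ContinuousLinearMap.apply ℝ (EuclideanSpace ℝ (Fin d))
              ((EuclideanSpace.basisFun (Fin d) ℝ).toBasis i))) L) L := by
    rfl
  rw [this]
  exact contDiff_prod fun i _ => (ContinuousLinearMap.contDiff _)

lemma hasDerivAt_detF_param (A : E →L[ℝ] E) (t : ℝ) :
    HasDerivAt (fun s : ℝ => detF d (1 + s • A)) (fderiv ℝ (detF d) (1 + t • A) A) t := by
  have hB : HasDerivAt (fun s : ℝ => (1 : E →L[ℝ] E) + s • A) A t := by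
    have := ((hasDerivAt_id t).smul_const A).const_add (1 : E →L[ℝ] E)
    rwa [one_smul] at this
  have hdet : HasFDerivAt (detF d) (fderiv ℝ (detF d) (1 + t • A)) (1 + t • A) :=
    ((contDiff_detF.differentiable (by simp)) (1 + t • A)).hasFDerivAt
  exact hdet.comp_hasDerivAt t hB

lemma hasDerivAt_detF_zero (A : E →L[ℝ] E) :
    HasDerivAt (fun s : ℝ => detF d (1 + s • A)) (trsum A) 0 := by
  obtain ⟨q, hq⟩ := exists_poly_det A
  have hfun : (fun s : ℝ => detF d (1 + s • A))
      = fun s : ℝ => 1 + trsum A * s + q.eval s * s ^ 2 := funext hq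
  rw [hfun]
  have h1 : HasDerivAt (fun s : ℝ => 1 + trsum A * s) (trsum A * 1) 0 :=
    ((hasDerivAt_id (0:ℝ)).const_mul (trsum A)).const_add 1
  have h2 : HasDerivAt (fun s : ℝ => q.eval s * s ^ 2)
      (q.derivative.eval 0 * 0 ^ 2 + q.eval 0 * ((2:ℕ) * 0 ^ 1)) 0 :=
    (Polynomial.hasDerivAt q 0).mul (hasDerivAt_pow 2 0)
  have := h1.add h2
  refine this.congr_deriv ?_
  simp

lemma deriv_bound : ∃ C : ℝ, 0 ≤ C ∧
    ∀ L : E →L[ℝ] E, ‖L - 1‖ ≤ 1/2 → ‖fderiv ℝ (detF d) L‖ ≤ C := by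
  have hc : Continuous fun L : E →L[ℝ] E => ‖fderiv ℝ (detF d) L‖ :=
    (contDiff_detF.continuous_fderiv (by simp)).norm
  have hK : IsCompact (Metric.closedBall (1 : E →L[ℝ] E) (1/2)) :=
    isCompact_closedBall _ _
  obtain ⟨C, hC⟩ := hK.exists_bound_of_continuousOn hc.continuousOn
  refine ⟨max C 0, le_max_right _ _, fun L hL => ?_⟩
  have : L ∈ Metric.closedBall (1 : E →L[ℝ] E) (1/2) := by
    rw [Metric.mem_closedBall, dist_eq_norm]; exact hL
  calc ‖fderiv ℝ (detF d) L‖ = ‖‖fderiv ℝ (detF d) L‖‖ := (Real.norm_of_nonneg (norm_nonneg (fderiv ℝ (detF d) L))).symm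
    _ ≤ C := hC L this
    _ ≤ max C 0 := le_max_left _ _

lemma detF_one : detF d 1 = 1 := by
  have : ((1 : E →L[ℝ] E) : E →ₗ[ℝ] E) = LinearMap.id := rfl
  rw [detF, ContinuousLinearMap.det, this, LinearMap.det_id]

lemma det_near_one : ∃ δ : ℝ, 0 < δ ∧
    ∀ L : E →L[ℝ] E, ‖L - 1‖ < δ → 1/2 < detF d L := by
  have hc : ContinuousAt (detF d) 1 := contDiff_detF.continuous.continuousAt
  rw [Metric.continuousAt_iff] at hc
  obtain ⟨δ, hδ, h⟩ := hc (1/2) (by norm_num)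
  refine ⟨δ, hδ, fun L hL => ?_⟩
  have := h (show dist L 1 < δ by rwa [dist_eq_norm])
  rw [detF_one, Real.dist_eq] at this
  have := abs_lt.1 this
  linarith [this.1]




variable {ζ : EuclideanSpace ℝ (Fin d) → EuclideanSpace ℝ (Fin d)}

lemma hasFDerivAt_S (hζ : ContDiff ℝ (⊤ : ℕ∞) ζ) (t : ℝ) (x : E) :
    HasFDerivAt (fun y => y + t • ζ y) ((1 : E →L[ℝ] E) + t • fderiv ℝ ζ x) x := by
  have h := ((hζ.differentiable (by simp) x).hasFDerivAt).const_smul t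
  have h2 := (hasFDerivAt_id x).add h
  exact h2

lemma zeta_lip (hζ : ContDiff ℝ (⊤ : ℕ∞) ζ) {K : ℝ} (hK : ∀ x, ‖fderiv ℝ ζ x‖ ≤ K) :
    ∀ x y : E, ‖ζ x - ζ y‖ ≤ K * ‖x - y‖ := by
  intro x y
  exact Convex.norm_image_sub_le_of_norm_fderiv_le
    (fun z _ => hζ.differentiable (by simp) z)
    (fun z _ => hK z) convex_univ (Set.mem_univ y) (Set.mem_univ x)

lemma exists_pack (hζ : ContDiff ℝ (⊤ : ℕ∞) ζ) (hc : HasCompactSupport ζ) :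
    ∃ (ε₀ Cζ C₂ K : ℝ), 0 < ε₀ ∧ 0 ≤ Cζ ∧ 0 ≤ C₂ ∧ 0 ≤ K ∧
      (∀ x, ‖ζ x‖ ≤ Cζ) ∧ (∀ x, ‖fderiv ℝ ζ x‖ ≤ K) ∧
      (∀ t : ℝ, |t| ≤ ε₀ →
        ((∀ x y : E, ‖x - y‖ ≤ 2 * ‖(x + t • ζ x) - (y + t • ζ y)‖) ∧
         (∀ x : E, 1/2 < detF d (1 + t • fderiv ℝ ζ x)) ∧
         (∀ x : E, ‖fderiv ℝ (detF d) (1 + t • fderiv ℝ ζ x)‖ ≤ C₂) ∧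
         (∃ T : E → E, Continuous T ∧ (∀ x, T (x + t • ζ x) = x) ∧
            (∀ y, (T y) + t • ζ (T y) = y)))) := by
  obtain ⟨Cζ, hCζ⟩ := hζ.continuous.bounded_above_of_compact_support hc
  have hCζ0 : 0 ≤ Cζ := le_trans (norm_nonneg _) (hCζ 0)
  obtain ⟨K, hK⟩ := (hζ.continuous_fderiv (by simp)).bounded_above_of_compact_support
    (hc.fderiv ℝ)
  have hK0 : 0 ≤ K := le_trans (norm_nonneg _) (hK 0)
  obtain ⟨C₂, hC₂0, hC₂⟩ := deriv_bound (d := d)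
  obtain ⟨δ, hδ0, hδ⟩ := det_near_one (d := d)
  set ε₀ : ℝ := min (1 / (2 * (K + 1))) (δ / (2 * (K + 1))) with hε₀
  have hden : 0 < 2 * (K + 1) := by linarith
  have hε₀0 : 0 < ε₀ := lt_min (by positivity) (by positivity)
  refine ⟨ε₀, Cζ, C₂, K, hε₀0, hCζ0, hC₂0, hK0, hCζ, hK, ?_⟩
  intro t ht
  have h1 : |t| * K ≤ 1 / 2 := by
    have h1a : |t| ≤ 1 / (2 * (K + 1)) := le_trans ht (min_le_left _ _)
    have := mul_le_mul_of_nonneg_right h1a hK0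
    calc |t| * K ≤ 1 / (2 * (K + 1)) * K := this
      _ ≤ 1 / 2 := by rw [div_mul_eq_mul_div, div_le_div_iff₀ hden (by norm_num)]; nlinarith
  have h2 : ∀ x : E, ‖t • fderiv ℝ ζ x‖ < δ := by
    intro x
    rw [norm_smul, Real.norm_eq_abs]
    have h2a : |t| ≤ δ / (2 * (K + 1)) := le_trans ht (min_le_right _ _)
    calc |t| * ‖fderiv ℝ ζ x‖ ≤ (δ / (2 * (K + 1))) * K := by
          apply mul_le_mul h2a (hK x) (norm_nonneg _) (by positivity)
      _ < δ := by rw [div_mul_eq_mul_div, div_lt_iff₀ hden]; nlinarith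
  have h3 : ∀ x : E, ‖t • fderiv ℝ ζ x‖ ≤ 1 / 2 := by
    intro x
    rw [norm_smul, Real.norm_eq_abs]
    calc |t| * ‖fderiv ℝ ζ x‖ ≤ |t| * K :=
          mul_le_mul_of_nonneg_left (hK x) (abs_nonneg t)
      _ ≤ 1 / 2 := h1
  have hlip := zeta_lip hζ hK
  have hinj : ∀ x y : E, ‖x - y‖ ≤ 2 * ‖(x + t • ζ x) - (y + t • ζ y)‖ := by
    intro x y
    have e1 : x - y = ((x + t • ζ x) - (y + t • ζ y)) - t • (ζ x - ζ y) := by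
      rw [smul_sub]; abel
    have e2 : ‖x - y‖ ≤ ‖(x + t • ζ x) - (y + t • ζ y)‖ + |t| * (K * ‖x - y‖) := by
      have e3 : ‖t • (ζ x - ζ y)‖ ≤ |t| * (K * ‖x - y‖) := by
        rw [norm_smul, Real.norm_eq_abs]
        exact mul_le_mul_of_nonneg_left (hlip x y) (abs_nonneg t)
      calc ‖x - y‖ = ‖((x + t • ζ x) - (y + t • ζ y)) - t • (ζ x - ζ y)‖ := by rw [← e1]
        _ ≤ ‖(x + t • ζ x) - (y + t • ζ y)‖ + ‖t • (ζ x - ζ y)‖ := norm_sub_le _ _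
        _ ≤ _ := add_le_add le_rfl e3
    nlinarith [mul_le_mul_of_nonneg_right h1 (norm_nonneg (x - y)), abs_nonneg t,
      norm_nonneg ((x + t • ζ x) - (y + t • ζ y))]
  refine ⟨hinj, ?_, ?_, ?_⟩
  · intro x
    apply hδ
    rw [add_sub_cancel_left]
    exact h2 x
  · intro x
    apply hC₂
    rw [add_sub_cancel_left]
    exact h3 x
  · -- construct inverse T via contraction fixed point
    have hcontr : ∀ y : E, ContractingWith (1/2 : ℝ≥0) (fun x : E => y - t • ζ x) := by
      intro y
      have hhalf : ((1/2 : ℝ≥0) : ℝ) = 1/2 := by norm_num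
      constructor
      · rw [← NNReal.coe_lt_coe, hhalf]; norm_num
      · apply LipschitzWith.of_dist_le_mul
        intro x x'
        rw [dist_eq_norm, dist_eq_norm]
        have e1 : (y - t • ζ x) - (y - t • ζ x') = t • (ζ x' - ζ x) := by
          rw [smul_sub]; abel
        rw [e1, norm_smul, Real.norm_eq_abs, hhalf]
        calc |t| * ‖ζ x' - ζ x‖ ≤ |t| * (K * ‖x' - x‖) :=
              mul_le_mul_of_nonneg_left (hlip x' x) (abs_nonneg t)
          _ ≤ (1/2) * ‖x' - x‖ := by nlinarith [norm_nonneg (x' - x), abs_nonneg t,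
              mul_le_mul_of_nonneg_right h1 (norm_nonneg (x' - x))]
          _ = 1/2 * ‖x - x'‖ := by rw [norm_sub_rev]
    set T : E → E := fun y => ContractingWith.fixedPoint _ (hcontr y) with hT
    have hTfix : ∀ y, T y = y - t • ζ (T y) := fun y =>
      ((hcontr y).fixedPoint_isFixedPt).symm
    have hST : ∀ y, (T y) + t • ζ (T y) = y := by
      intro y
      have h := hTfix y
      rwa [eq_sub_iff_add_eq] at h
    have hTS : ∀ x, T (x + t • ζ x) = x := by
      intro x
      have := hST (x + t • ζ x)
      have h := hinj (T (x + t • ζ x)) x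
      rw [this, sub_self, norm_zero, mul_zero] at h
      exact sub_eq_zero.mp (norm_le_zero_iff.mp h)
    have hTlip : Continuous T := by
      apply LipschitzWith.continuous (K := 2)
      apply LipschitzWith.of_dist_le_mul
      intro y y'
      have h := hinj (T y) (T y')
      rw [hST y, hST y'] at h
      rw [dist_eq_norm, dist_eq_norm]
      have h2 : ((2 : ℝ≥0) : ℝ) = 2 := by norm_num
      rw [h2]
      linarith
    exact ⟨T, hTlip, hTS, hST⟩



lemma withDensity_univ (ρ : E → ℝ) :
    (volume.withDensity fun x => ENNReal.ofReal (ρ x)) Set.univ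
      = ∫⁻ x, ENNReal.ofReal (ρ x) := by
  rw [withDensity_apply _ MeasurableSet.univ, setLIntegral_univ]

lemma integrable_of_lintegral_lt {α : Type*} [MeasurableSpace α] {μ : Measure α}
    {f : α → ℝ} (hm : Measurable f) (h0 : ∀ x, 0 ≤ f x)
    (hf : ∫⁻ x, ENNReal.ofReal (f x) ∂μ < ⊤) : Integrable f μ :=
  ⟨hm.aestronglyMeasurable, (hasFiniteIntegral_iff_ofReal (.of_forall h0)).2 hf⟩

lemma lintegral_toReal_eq {α : Type*} [MeasurableSpace α] {μ : Measure α}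
    {f : α → ℝ} (hm : Measurable f) (h0 : ∀ x, 0 ≤ f x)
    (hf : ∫⁻ x, ENNReal.ofReal (f x) ∂μ < ⊤) :
    (∫⁻ x, ENNReal.ofReal (f x) ∂μ).toReal = ∫ x, f x ∂μ := by
  rw [← ofReal_integral_eq_lintegral_ofReal (integrable_of_lintegral_lt hm h0 hf)
    (.of_forall h0), ENNReal.toReal_ofReal (integral_nonneg h0)]

/-- Change of variables: pushforward of a density under a nice bijection. -/
lemma map_withDensity_eq {ρs : E → ℝ} (hρm : Measurable ρs) (hρ0 : ∀ x, 0 ≤ ρs x)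
    {S T : E → E} {B : E → (E →L[ℝ] E)}
    (hSd : ∀ x, HasFDerivAt S (B x) x)
    (hdet : ∀ x, 0 < (B x).det)
    (hTS : ∀ x, T (S x) = x) (hST : ∀ y, S (T y) = y) :
    (volume.withDensity fun x => ENNReal.ofReal (ρs x)).map S
      = volume.withDensity fun y =>
          ENNReal.ofReal (ρs (T y) * ((B (T y)).det)⁻¹) := by
  have hScont : Continuous S := by
    rw [continuous_iff_continuousAt]; exact fun x => (hSd x).continuousAt
  have hSm : Measurable S := hScont.measurable
  have hSinj : Function.Injective S := by
    intro a b hab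
    have := congrArg T hab
    rwa [hTS, hTS] at this
  have hSsurj : Function.Surjective S := fun y => ⟨T y, hST y⟩
  refine Measure.ext fun F hF => ?_
  rw [Measure.map_apply hSm hF, withDensity_apply _ (hSm hF), withDensity_apply _ hF]
  have hcov := lintegral_image_eq_lintegral_abs_det_fderiv_mul (volume : Measure E)
    (hSm hF) (fun x _ => (hSd x).hasFDerivWithinAt) (Function.Injective.injOn hSinj)
    (fun y => ENNReal.ofReal (ρs (T y) * ((B (T y)).det)⁻¹))
  rw [Set.image_preimage_eq F hSsurj] at hcov
  rw [hcov]
  apply setLIntegral_congr_fun (hSm hF)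
  intro x _
  dsimp only
  rw [hTS x, ← ENNReal.ofReal_mul (abs_nonneg _), abs_of_pos (hdet x)]
  congr 1
  rw [mul_comm (ρs x) ((B x).det)⁻¹, ← mul_assoc, mul_inv_cancel₀ (ne_of_gt (hdet x)), one_mul]

/-- Change of variables for the energy-type integrand. -/
lemma lintegral_comp_eq {ρs : E → ℝ} (hρ0 : ∀ x, 0 ≤ ρs x)
    {S T : E → E} {B : E → (E →L[ℝ] E)} {γ : ℝ}
    (hSd : ∀ x, HasFDerivAt S (B x) x)
    (hdet : ∀ x, 0 < (B x).det)
    (hTS : ∀ x, T (S x) = x) (hST : ∀ y, S (T y) = y) :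
    ∫⁻ y, ENNReal.ofReal ((ρs (T y) * ((B (T y)).det)⁻¹) ^ γ)
      = ∫⁻ x, ENNReal.ofReal (ρs x ^ γ * (B x).det ^ (1 - γ)) := by
  have hSsurj : Function.Surjective S := fun y => ⟨T y, hST y⟩
  have hSinj : Function.Injective S := by
    intro a b hab
    have := congrArg T hab
    rwa [hTS, hTS] at this
  have key : ∀ r D : ℝ, 0 ≤ r → 0 < D → D * ((r * D⁻¹) ^ γ) = r ^ γ * D ^ (1 - γ) := by
    intro r D hr hD
    rw [Real.mul_rpow hr (inv_nonneg.2 hD.le), Real.inv_rpow hD.le,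
      show (1:ℝ) - γ = 1 + (-γ) by ring, Real.rpow_add hD, Real.rpow_one,
      Real.rpow_neg hD.le]
    ring
  have hcov := lintegral_image_eq_lintegral_abs_det_fderiv_mul (volume : Measure E)
    MeasurableSet.univ (fun x _ => (hSd x).hasFDerivWithinAt)
    (Function.Injective.injOn hSinj)
    (fun y => ENNReal.ofReal ((ρs (T y) * ((B (T y)).det)⁻¹) ^ γ))
  rw [Set.image_univ, hSsurj.range_eq] at hcov
  rw [← setLIntegral_univ (fun y => ENNReal.ofReal ((ρs (T y) * ((B (T y)).det)⁻¹) ^ γ)),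
    hcov, ← setLIntegral_univ (fun x => ENNReal.ofReal (ρs x ^ γ * (B x).det ^ (1 - γ)))]
  apply setLIntegral_congr_fun MeasurableSet.univ
  intro x _
  dsimp only
  rw [hTS x, ← ENNReal.ofReal_mul (abs_nonneg _), abs_of_pos (hdet x)]
  congr 1
  exact key (ρs x) ((B x).det) (hρ0 x) (hdet x)



lemma meas_normsq : Measurable fun x : EuclideanSpace ℝ (Fin d) => ENNReal.ofReal (‖x‖ ^ 2) :=
  ((continuous_norm.pow 2).measurable).ennreal_ofReal

lemma cost_measurable :
    Measurable fun p : (EuclideanSpace ℝ (Fin d)) × (EuclideanSpace ℝ (Fin d)) =>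
      ENNReal.ofReal (‖p.1 - p.2‖ ^ 2) :=
  ((measurable_fst.sub measurable_snd).norm.pow_const 2).ennreal_ofReal

lemma W2sq_le_coupling {μ ν : Measure (EuclideanSpace ℝ (Fin d))}
    (π : Measure ((EuclideanSpace ℝ (Fin d)) × (EuclideanSpace ℝ (Fin d))))
    (h1 : π.map Prod.fst = μ) (h2 : π.map Prod.snd = ν) :
    W2sq μ ν ≤ ∫⁻ p, ENNReal.ofReal (‖p.1 - p.2‖ ^ 2) ∂π := by
  refine le_trans (iInf_le _ π) ?_
  rw [iInf_pos h1, iInf_pos h2]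

lemma W2sq_le_graph {μ : Measure (EuclideanSpace ℝ (Fin d))} {f : E → E} (hf : Measurable f) :
    W2sq μ (μ.map f) ≤ ∫⁻ x, ENNReal.ofReal (‖x - f x‖ ^ 2) ∂μ := by
  have hpair : Measurable fun x : E => (x, f x) := measurable_id.prodMk hf
  have h1 : (μ.map fun x => (x, f x)).map Prod.fst = μ := by
    rw [Measure.map_map measurable_fst hpair]
    simp [Function.comp_def]
  have h2 : (μ.map fun x => (x, f x)).map Prod.snd = μ.map f := by
    rw [Measure.map_map measurable_snd hpair]
    rfl
  refine le_trans (W2sq_le_coupling _ h1 h2) ?_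
  rw [lintegral_map cost_measurable hpair]

lemma W2sq_lt_top {μ ν : Measure (EuclideanSpace ℝ (Fin d))}
    [IsProbabilityMeasure μ] [IsProbabilityMeasure ν]
    (hμ : ∫⁻ x, ENNReal.ofReal (‖x‖ ^ 2) ∂μ < ⊤)
    (hν : ∫⁻ x, ENNReal.ofReal (‖x‖ ^ 2) ∂ν < ⊤) : W2sq μ ν < ⊤ := by
  have h1 : (μ.prod ν).map Prod.fst = μ := by simp [Measure.map_fst_prod]
  have h2 : (μ.prod ν).map Prod.snd = ν := by simp [Measure.map_snd_prod]
  refine lt_of_le_of_lt (W2sq_le_coupling _ h1 h2) ?_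
  have hpt : ∀ p : E × E, ENNReal.ofReal (‖p.1 - p.2‖ ^ 2)
      ≤ ENNReal.ofReal (2 * ‖p.1‖ ^ 2) + ENNReal.ofReal (2 * ‖p.2‖ ^ 2) := by
    intro p
    rw [← ENNReal.ofReal_add (by positivity) (by positivity)]
    apply ENNReal.ofReal_le_ofReal
    have := norm_sub_le p.1 p.2
    nlinarith [sq_nonneg (‖p.1‖ - ‖p.2‖), norm_nonneg p.1, norm_nonneg p.2,
      norm_nonneg (p.1 - p.2)]
  refine lt_of_le_of_lt (lintegral_mono hpt) ?_
  rw [lintegral_add_left (by exact (measurable_fst.norm.pow_const 2).const_mul 2 |>.ennreal_ofReal)]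
  have e1 : ∫⁻ p : E × E, ENNReal.ofReal (2 * ‖p.1‖ ^ 2) ∂(μ.prod ν)
      = 2 * ∫⁻ x, ENNReal.ofReal (‖x‖ ^ 2) ∂μ := by
    simp_rw [ENNReal.ofReal_mul (by norm_num : (0:ℝ) ≤ 2)]
    rw [lintegral_const_mul' _ _ (by norm_num), ← lintegral_map meas_normsq measurable_fst, h1]
    norm_num
  have e2 : ∫⁻ p : E × E, ENNReal.ofReal (2 * ‖p.2‖ ^ 2) ∂(μ.prod ν)
      = 2 * ∫⁻ x, ENNReal.ofReal (‖x‖ ^ 2) ∂ν := by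
    simp_rw [ENNReal.ofReal_mul (by norm_num : (0:ℝ) ≤ 2)]
    rw [lintegral_const_mul' _ _ (by norm_num), ← lintegral_map meas_normsq measurable_snd, h2]
    norm_num
  rw [e1, e2]
  exact ENNReal.add_lt_top.2 ⟨ENNReal.mul_lt_top (by norm_num) hμ,
    ENNReal.mul_lt_top (by norm_num) hν⟩

lemma moment_withDensity {ρ : E → ℝ} (hρm : Measurable ρ) (hρ0 : ∀ x, 0 ≤ ρ x) :
    ∫⁻ x, ENNReal.ofReal (‖x‖ ^ 2) ∂(volume.withDensity fun x => ENNReal.ofReal (ρ x))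
      = ∫⁻ x, ENNReal.ofReal (‖x‖ ^ 2 * ρ x) := by
  rw [lintegral_withDensity_eq_lintegral_mul _ hρm.ennreal_ofReal meas_normsq]
  congr 1
  funext x
  rw [Pi.mul_apply, ← ENNReal.ofReal_mul (hρ0 x), mul_comm]

lemma energy_split {γ : ℝ} (hγ : 1 < γ) (ρ : E → ℝ) :
    ∫⁻ z, ENNReal.ofReal (ρ z ^ γ / (γ - 1))
      = ENNReal.ofReal ((γ-1)⁻¹) * ∫⁻ z, ENNReal.ofReal (ρ z ^ γ) := by
  rw [← lintegral_const_mul' _ _ (by exact ENNReal.ofReal_ne_top)]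
  congr 1
  funext z
  have hpos : (0:ℝ) ≤ (γ - 1)⁻¹ := inv_nonneg.2 (by linarith)
  rw [div_eq_mul_inv, mul_comm, ENNReal.ofReal_mul hpos]

lemma integral_withDensity_aux {ρ : E → ℝ} (hρm : Measurable ρ) (hρ0 : ∀ x, 0 ≤ ρ x)
    (f : E → ℝ) :
    ∫ x, f x ∂(volume.withDensity fun x => ENNReal.ofReal (ρ x)) = ∫ x, f x * ρ x := by
  have h : (volume.withDensity fun x => ENNReal.ofReal (ρ x))
      = volume.withDensity (fun x => ((ρ x).toNNReal : ℝ≥0∞)) := rfl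
  rw [h, integral_withDensity_eq_integral_smul hρm.real_toNNReal f]
  congr 1
  funext x
  rw [NNReal.smul_def, smul_eq_mul, Real.coe_toNNReal _ (hρ0 x), mul_comm]


lemma trsum_continuous {X : Type*} [TopologicalSpace X]
    {Af : X → (EuclideanSpace ℝ (Fin d) →L[ℝ] EuclideanSpace ℝ (Fin d))}
    (h : Continuous Af) : Continuous fun x => trsum (Af x) := by
  simp only [trsum]
  apply continuous_finset_sum
  intro j _
  have h1 : Continuous fun x => (Af x) (EuclideanSpace.single j 1) :=
    h.clm_apply continuous_const
  have h2 := (EuclideanSpace.proj (𝕜 := ℝ) j).continuous.comp h1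
  exact h2

lemma scalar_bound {γ C2K r D' dv : ℝ} (hγ : 1 < γ) (hr : 0 ≤ r) (hD' : |D'| ≤ C2K)
    (hδ : 1/2 < dv) :
    |r * (D' * (1-γ) * dv ^ (1-γ-1))| ≤ r * (C2K * ((γ-1) * 2 ^ γ)) := by
  have hdv : 0 < dv := lt_trans one_half_pos hδ
  have h1 : (1-γ-1 : ℝ) = -γ := by ring
  rw [h1, abs_mul, abs_of_nonneg hr, abs_mul, abs_mul]
  have h2 : |(1-γ)| = γ - 1 := by rw [abs_of_nonpos (by linarith)]; ring
  have h3 : |dv ^ (-γ)| = dv ^ (-γ) := abs_of_nonneg (Real.rpow_nonneg hdv.le _)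
  have h4 : dv ^ (-γ) ≤ 2 ^ γ := by
    rw [Real.rpow_neg hdv.le]
    have h5 : (1/2:ℝ) ^ γ ≤ dv ^ γ :=
      Real.rpow_le_rpow (by norm_num) (le_of_lt hδ) (by linarith)
    have h6 : ((1/2:ℝ)) ^ γ = (2 ^ γ)⁻¹ := by
      rw [one_div, Real.inv_rpow (by norm_num : (0:ℝ) ≤ 2)]
    have h7 : (0:ℝ) < (1/2) ^ γ := Real.rpow_pos_of_pos (by norm_num) _
    calc (dv ^ γ)⁻¹ ≤ ((1/2:ℝ) ^ γ)⁻¹ := by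
          apply inv_anti₀ h7 h5
      _ = 2 ^ γ := by rw [h6, inv_inv]
  rw [h2, h3]
  have hC : 0 ≤ C2K := le_trans (abs_nonneg _) hD'
  have hdγ : 0 ≤ dv ^ (-γ) := Real.rpow_nonneg hdv.le _
  have key : |D'| * (γ-1) * dv ^ (-γ) ≤ C2K * ((γ-1) * 2 ^ γ) := by
    have s1 : |D'| * (γ-1) ≤ C2K * (γ-1) :=
      mul_le_mul_of_nonneg_right hD' (by linarith)
    have s2 : |D'| * (γ-1) * dv ^ (-γ) ≤ C2K * (γ-1) * (2 ^ γ) := by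
      apply mul_le_mul s1 h4 hdγ (mul_nonneg hC (by linarith))
    calc |D'| * (γ-1) * dv ^ (-γ) ≤ C2K * (γ-1) * (2 ^ γ) := s2
      _ = C2K * ((γ-1) * 2 ^ γ) := by ring
  exact mul_le_mul_of_nonneg_left key hr


end DarcyAux

set_option maxHeartbeats 2000000 in
set_option synthInstance.maxHeartbeats 100000 in
/-- **Weak Euler–Lagrange equation (discrete Darcy law) for the minimizing movement step.**
If `ρ*` minimizes `ρ ↦ (1/(2τ)) W(ρⁿ, ρ)² + ∫ ρ^γ/(γ-1)` over probability densities with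
finite second moment, and `R = ∇φ` (with `φ` convex) is an optimal transport map from
`ρⁿ·Leb` to `ρ*·Leb`, then for every smooth compactly supported vector field `ζ`,
`(1/τ) ∫ ζ(R(x))·(R(x)-x) ρⁿ(x) dx = ∫ (ρ*(z))^γ (div ζ)(z) dz`. -/
theorem discrete_darcy_law (d : ℕ) (hd : 1 ≤ d) (γ τ : ℝ) (hγ : 1 < γ) (hτ : 0 < τ)
    (ρn ρstar : EuclideanSpace ℝ (Fin d) → ℝ)
    (hρn_meas : Measurable ρn) (hρn_nonneg : ∀ x, 0 ≤ ρn x)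
    (hρn_prob : ∫⁻ x, ENNReal.ofReal (ρn x) = 1)
    (hρn_mom : ∫⁻ x, ENNReal.ofReal (‖x‖ ^ 2 * ρn x) < ⊤)
    (hρn_energy : ∫⁻ x, ENNReal.ofReal (ρn x ^ γ) < ⊤)
    (hρstar_meas : Measurable ρstar) (hρstar_nonneg : ∀ x, 0 ≤ ρstar x)
    (hρstar_prob : ∫⁻ x, ENNReal.ofReal (ρstar x) = 1)
    (hρstar_mom : ∫⁻ x, ENNReal.ofReal (‖x‖ ^ 2 * ρstar x) < ⊤)
    (hρstar_energy : ∫⁻ x, ENNReal.ofReal (ρstar x ^ γ) < ⊤)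
    (hmin : ∀ ρ : EuclideanSpace ℝ (Fin d) → ℝ, Measurable ρ → (∀ x, 0 ≤ ρ x) →
      (∫⁻ x, ENNReal.ofReal (ρ x) = 1) →
      (∫⁻ x, ENNReal.ofReal (‖x‖ ^ 2 * ρ x) < ⊤) →
      ENNReal.ofReal (1 / (2 * τ)) *
          W2sq (volume.withDensity fun x => ENNReal.ofReal (ρn x))
            (volume.withDensity fun x => ENNReal.ofReal (ρstar x)) +
          ∫⁻ z, ENNReal.ofReal (ρstar z ^ γ / (γ - 1)) ≤
        ENNReal.ofReal (1 / (2 * τ)) *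
            W2sq (volume.withDensity fun x => ENNReal.ofReal (ρn x))
              (volume.withDensity fun x => ENNReal.ofReal (ρ x)) +
          ∫⁻ z, ENNReal.ofReal (ρ z ^ γ / (γ - 1)))
    (R : EuclideanSpace ℝ (Fin d) → EuclideanSpace ℝ (Fin d))
    (φ : EuclideanSpace ℝ (Fin d) → ℝ)
    (hφ : ConvexOn ℝ Set.univ φ)
    (hgrad : ∀ x, HasGradientAt φ (R x) x)
    (hpush : Measure.map R (volume.withDensity fun x => ENNReal.ofReal (ρn x)) =
      volume.withDensity fun x => ENNReal.ofReal (ρstar x))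
    (hopt : ∫⁻ x, ENNReal.ofReal (‖R x - x‖ ^ 2)
          ∂(volume.withDensity fun x => ENNReal.ofReal (ρn x)) =
        W2sq (volume.withDensity fun x => ENNReal.ofReal (ρn x))
          (volume.withDensity fun x => ENNReal.ofReal (ρstar x))) :
    ∀ ζ : EuclideanSpace ℝ (Fin d) → EuclideanSpace ℝ (Fin d),
      ContDiff ℝ (⊤ : ℕ∞) ζ → HasCompactSupport ζ →
      (1 / τ) * ∫ x, (inner ℝ (ζ (R x)) (R x - x) : ℝ) * ρn x =
        ∫ z, ρstar z ^ γ * ∑ j, fderiv ℝ ζ z (EuclideanSpace.single j 1) j := by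
  intro ζ hζ hζc
  classical
  set μn := volume.withDensity fun x => ENNReal.ofReal (ρn x) with hμn
  set μs := volume.withDensity fun x => ENNReal.ofReal (ρstar x) with hμs
  have hRm : Measurable R := by
    have hR : R = fun x => (InnerProductSpace.toDual ℝ (EuclideanSpace ℝ (Fin d))).symm
        (fderiv ℝ φ x) := by
      funext x
      rw [(hgrad x).hasFDerivAt.fderiv, LinearIsometryEquiv.symm_apply_apply]
    rw [hR]
    exact (LinearIsometryEquiv.continuous _).measurable.comp (measurable_fderiv ℝ φ)
  have hprobn : IsProbabilityMeasure μn :=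
    ⟨by rw [hμn, DarcyAux.withDensity_univ]; exact hρn_prob⟩
  have hprobs : IsProbabilityMeasure μs :=
    ⟨by rw [hμs, DarcyAux.withDensity_univ]; exact hρstar_prob⟩
  have hmomn : ∫⁻ x, ENNReal.ofReal (‖x‖ ^ 2) ∂μn < ⊤ := by
    rw [hμn, DarcyAux.moment_withDensity hρn_meas hρn_nonneg]; exact hρn_mom
  have hmoms : ∫⁻ x, ENNReal.ofReal (‖x‖ ^ 2) ∂μs < ⊤ := by
    rw [hμs, DarcyAux.moment_withDensity hρstar_meas hρstar_nonneg]; exact hρstar_mom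
  have hWlt : W2sq μn μs < ⊤ := DarcyAux.W2sq_lt_top hmomn hmoms
  obtain ⟨ε₀, Cζ, C₂, K, hε₀0, hCζ0, hC₂0, hK0, hCζ, hK, hpack⟩ := DarcyAux.exists_pack hζ hζc
  set A := fderiv ℝ ζ with hA
  set f₁ : EuclideanSpace ℝ (Fin d) → ℝ := fun x => ‖R x - x‖ ^ 2 with hf₁
  set g : EuclideanSpace ℝ (Fin d) → ℝ := fun x => (inner ℝ (ζ (R x)) (R x - x) : ℝ) with hg
  set q2 : EuclideanSpace ℝ (Fin d) → ℝ := fun x => ‖ζ (R x)‖ ^ 2 with hq2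
  have hf₁m : Measurable f₁ := ((hRm.sub measurable_id).norm.pow_const 2)
  have hgm : Measurable g :=
    (hζ.continuous.measurable.comp hRm).inner (hRm.sub measurable_id)
  have hq2m : Measurable q2 := ((hζ.continuous.measurable.comp hRm).norm.pow_const 2)
  have hf₁0 : ∀ x, 0 ≤ f₁ x := fun x => sq_nonneg _
  have hopt' : ∫⁻ x, ENNReal.ofReal (f₁ x) ∂μn = W2sq μn μs := hopt
  have hf₁int : Integrable f₁ μn :=
    DarcyAux.integrable_of_lintegral_lt hf₁m hf₁0 (by rw [hopt']; exact hWlt)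
  have hgabs : ∀ x, |g x| ≤ Cζ * (1 + f₁ x) := by
    intro x
    have h1 : |g x| ≤ ‖ζ (R x)‖ * ‖R x - x‖ := abs_real_inner_le_norm _ _
    have h3 : ‖R x - x‖ ≤ 1 + f₁ x := by
      simp only [hf₁]
      nlinarith [norm_nonneg (R x - x), sq_nonneg (‖R x - x‖ - 1)]
    calc |g x| ≤ ‖ζ (R x)‖ * ‖R x - x‖ := h1
      _ ≤ Cζ * (1 + f₁ x) := mul_le_mul (hCζ _) h3 (norm_nonneg _) hCζ0
  have hgint : Integrable g μn := by
    refine Integrable.mono (((integrable_const (1:ℝ)).add hf₁int).const_mul Cζ)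
      hgm.aestronglyMeasurable ?_
    refine Filter.Eventually.of_forall fun x => ?_
    rw [Real.norm_eq_abs, Real.norm_eq_abs]
    exact le_trans (hgabs x) (le_abs_self _)
  have hq2int : Integrable q2 μn := by
    refine Integrable.mono (integrable_const (Cζ^2)) hq2m.aestronglyMeasurable ?_
    refine Filter.Eventually.of_forall fun x => ?_
    rw [Real.norm_eq_abs, Real.norm_eq_abs, abs_of_nonneg (sq_nonneg _)]
    refine le_trans ?_ (le_abs_self _)
    have := hCζ (R x)
    simp only [hq2]
    nlinarith [norm_nonneg (ζ (R x))]
  set Wr := ∫ x, f₁ x ∂μn with hWrdef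
  set I₁ := ∫ x, g x ∂μn with hI₁def
  set I₂ := ∫ x, q2 x ∂μn with hI₂def
  have hWrW : (W2sq μn μs).toReal = Wr := by
    rw [← hopt']
    exact DarcyAux.lintegral_toReal_eq hf₁m hf₁0 (by rw [hopt']; exact hWlt)
  have hγ1 : (0:ℝ) < γ - 1 := by linarith
  have hJm : Measurable fun z => ρstar z ^ γ :=
    (Real.continuous_rpow_const (by linarith)).measurable.comp hρstar_meas
  have hJ0 : ∀ z, 0 ≤ ρstar z ^ γ := fun z => Real.rpow_nonneg (hρstar_nonneg z) γ
  have hJint : Integrable (fun z => ρstar z ^ γ) volume :=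
    DarcyAux.integrable_of_lintegral_lt hJm hJ0 hρstar_energy
  set J := ∫ z, ρstar z ^ γ with hJdef
  have hJeq : (∫⁻ z, ENNReal.ofReal (ρstar z ^ γ)).toReal = J :=
    DarcyAux.lintegral_toReal_eq hJm hJ0 hρstar_energy
  have hEstar_split := DarcyAux.energy_split (d := d) hγ ρstar
  have hEstarlt : ∫⁻ z, ENNReal.ofReal (ρstar z ^ γ / (γ - 1)) < ⊤ := by
    rw [hEstar_split]; exact ENNReal.mul_lt_top ENNReal.ofReal_lt_top hρstar_energy
  have hEstar_toReal : (∫⁻ z, ENNReal.ofReal (ρstar z ^ γ / (γ - 1))).toReal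
      = (γ-1)⁻¹ * J := by
    rw [hEstar_split, ENNReal.toReal_mul, ENNReal.toReal_ofReal (inv_nonneg.2 hγ1.le), hJeq]
  set Elin : ℝ → ℝ :=
    fun t => ∫ x, ρstar x ^ γ * (DarcyAux.detF d (1 + t • A x)) ^ (1-γ) with hElin
  have h2τ : (0:ℝ) ≤ 1/(2*τ) := by
    apply le_of_lt; apply div_pos one_pos; linarith
  -- Key inequality from the minimality of ρstar, for every |t| ≤ ε₀
  have key : ∀ t : ℝ, |t| ≤ ε₀ →
      (1/(2*τ)) * Wr + (γ-1)⁻¹ * J ≤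
        (1/(2*τ)) * (Wr + 2*t*I₁ + t^2*I₂) + (γ-1)⁻¹ * (Elin t) := by
    intro t ht
    obtain ⟨hinj, hdethalf, hC₂b, T, hTcont, hTS, hST⟩ := hpack t ht
    set St : EuclideanSpace ℝ (Fin d) → EuclideanSpace ℝ (Fin d) :=
      fun x => x + t • ζ x with hSt
    set Bt : EuclideanSpace ℝ (Fin d) →
        (EuclideanSpace ℝ (Fin d) →L[ℝ] EuclideanSpace ℝ (Fin d)) :=
      fun x => 1 + t • A x with hBt
    have hSd : ∀ x, HasFDerivAt St (Bt x) x := fun x => DarcyAux.hasFDerivAt_S hζ t x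
    have hdet0 : ∀ x, 0 < (Bt x).det := fun x => lt_trans (by norm_num) (hdethalf x)
    have hStm : Measurable St := (continuous_id.add (hζ.continuous.const_smul t)).measurable
    have hBtc : Continuous Bt :=
      continuous_const.add ((hζ.continuous_fderiv (by simp)).const_smul t)
    have hBtdetc : Continuous fun x => (Bt x).det :=
      DarcyAux.contDiff_detF.continuous.comp hBtc
    set ρt : EuclideanSpace ℝ (Fin d) → ℝ :=
      fun y => ρstar (T y) * ((Bt (T y)).det)⁻¹ with hρtdef
    have hρtm : Measurable ρt :=
      (hρstar_meas.comp hTcont.measurable).mul ((hBtdetc.comp hTcont).measurable.inv)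
    have hρt0 : ∀ y, 0 ≤ ρt y := fun y => mul_nonneg (hρstar_nonneg _) (inv_nonneg.2 (hdet0 _).le)
    have hmap : μs.map St = volume.withDensity fun y => ENNReal.ofReal (ρt y) := by
      rw [hμs]
      exact DarcyAux.map_withDensity_eq hρstar_meas hρstar_nonneg hSd hdet0 hTS hST
    have hρtprob : ∫⁻ x, ENNReal.ofReal (ρt x) = 1 := by
      rw [← DarcyAux.withDensity_univ ρt, ← hmap, Measure.map_apply hStm MeasurableSet.univ]
      simp [measure_univ]
    have hρtmom : ∫⁻ x, ENNReal.ofReal (‖x‖ ^ 2 * ρt x) < ⊤ := by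
      rw [← DarcyAux.moment_withDensity hρtm hρt0, ← hmap,
        lintegral_map DarcyAux.meas_normsq hStm]
      have hb : ∀ x, ENNReal.ofReal (‖St x‖ ^ 2)
          ≤ ENNReal.ofReal (2 * ‖x‖ ^ 2) + ENNReal.ofReal (2 * (ε₀ * Cζ)^2) := by
        intro x
        rw [← ENNReal.ofReal_add (by positivity) (by positivity)]
        apply ENNReal.ofReal_le_ofReal
        have h1 : ‖St x‖ ≤ ‖x‖ + |t| * ‖ζ x‖ := by
          simp only [hSt]
          refine le_trans (norm_add_le _ _) ?_
          rw [norm_smul, Real.norm_eq_abs]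
        have h2 : |t| * ‖ζ x‖ ≤ ε₀ * Cζ :=
          mul_le_mul ht (hCζ x) (norm_nonneg _) (le_of_lt hε₀0)
        have h3 : ‖St x‖ ^ 2 ≤ (‖x‖ + |t| * ‖ζ x‖) ^ 2 :=
          pow_le_pow_left₀ (norm_nonneg _) h1 2
        have h4 : (|t| * ‖ζ x‖) ^ 2 ≤ (ε₀ * Cζ) ^ 2 :=
          pow_le_pow_left₀ (mul_nonneg (abs_nonneg t) (norm_nonneg (ζ x))) h2 2
        nlinarith [sq_nonneg (‖x‖ - |t| * ‖ζ x‖), h3, h4]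
      refine lt_of_le_of_lt (lintegral_mono hb) ?_
      rw [lintegral_add_right _ measurable_const]
      refine ENNReal.add_lt_top.2 ⟨?_, ?_⟩
      · simp_rw [ENNReal.ofReal_mul (by norm_num : (0:ℝ) ≤ 2)]
        rw [lintegral_const_mul' _ _ (by norm_num)]
        exact ENNReal.mul_lt_top (by norm_num) hmoms
      · rw [lintegral_const]
        exact ENNReal.mul_lt_top ENNReal.ofReal_lt_top (by simp [measure_univ])
    have hDle : ∀ x, ((Bt x).det) ^ (1-γ) ≤ 2 ^ (γ-1) := by
      intro x
      have h1 : ((Bt x).det) ^ (1-γ) ≤ ((1:ℝ)/2) ^ (1-γ) :=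
        Real.rpow_le_rpow_of_nonpos one_half_pos (le_of_lt (hdethalf x)) (by linarith)
      have h2 : ((1:ℝ)/2) ^ (1-γ) = 2 ^ (γ-1) := by
        rw [one_div, Real.inv_rpow (by norm_num : (0:ℝ) ≤ 2), ← Real.rpow_neg (by norm_num)]
        congr 1
        ring
      rw [← h2]; exact h1
    have hcomp := DarcyAux.lintegral_comp_eq (γ := γ) hρstar_nonneg hSd hdet0 hTS hST
    have hmeas2 : Measurable fun x => ρstar x ^ γ * (Bt x).det ^ (1-γ) := by
      apply hJm.mul
      exact ((hBtdetc.rpow_const fun x => Or.inl (ne_of_gt (hdet0 x)))).measurable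
    have hEnergyLt : ∫⁻ z, ENNReal.ofReal (ρt z ^ γ) < ⊤ := by
      rw [hcomp]
      have hpt : ∀ x, ENNReal.ofReal (ρstar x ^ γ * (Bt x).det ^ (1-γ))
          ≤ ENNReal.ofReal (2 ^ (γ-1) * ρstar x ^ γ) := by
        intro x
        apply ENNReal.ofReal_le_ofReal
        nlinarith [hDle x, hJ0 x, Real.rpow_nonneg (hdet0 x).le (1-γ)]
      refine lt_of_le_of_lt (lintegral_mono hpt) ?_
      simp_rw [ENNReal.ofReal_mul (Real.rpow_nonneg (by norm_num : (0:ℝ) ≤ 2) _)]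
      rw [lintegral_const_mul' _ _ ENNReal.ofReal_ne_top]
      exact ENNReal.mul_lt_top ENNReal.ofReal_lt_top hρstar_energy
    have hEt_split := DarcyAux.energy_split (d := d) hγ ρt
    have hEtlt : ∫⁻ z, ENNReal.ofReal (ρt z ^ γ / (γ - 1)) < ⊤ := by
      rw [hEt_split]; exact ENNReal.mul_lt_top ENNReal.ofReal_lt_top hEnergyLt
    have hEnergyFin2 : ∫⁻ x, ENNReal.ofReal (ρstar x ^ γ * (Bt x).det ^ (1-γ)) < ⊤ := by
      rw [← hcomp]; exact hEnergyLt
    have hEt_toReal : (∫⁻ z, ENNReal.ofReal (ρt z ^ γ / (γ - 1))).toReal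
        = (γ-1)⁻¹ * Elin t := by
      rw [hEt_split, ENNReal.toReal_mul, ENNReal.toReal_ofReal (inv_nonneg.2 hγ1.le)]
      congr 1
      rw [hcomp]
      have := DarcyAux.lintegral_toReal_eq hmeas2
        (fun x => mul_nonneg (hJ0 x) (Real.rpow_nonneg (hdet0 x).le _)) hEnergyFin2
      rw [this]
      simp only [hElin, hBt, DarcyAux.detF_apply]
    -- coupling upper bound for the Wasserstein term
    have hmapcomp : μn.map (St ∘ R) = volume.withDensity fun y => ENNReal.ofReal (ρt y) := by
      rw [← Measure.map_map hStm hRm, hpush, hmap]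
    have hW2le : W2sq μn (volume.withDensity fun y => ENNReal.ofReal (ρt y))
        ≤ ∫⁻ x, ENNReal.ofReal (‖x - St (R x)‖ ^ 2) ∂μn := by
      have h := DarcyAux.W2sq_le_graph (μ := μn) (f := St ∘ R) (hStm.comp hRm)
      rw [hmapcomp] at h
      exact h
    set ft : EuclideanSpace ℝ (Fin d) → ℝ := fun x => f₁ x + 2*t*g x + t^2 * q2 x with hft
    have hftpt : ∀ x, ‖x - St (R x)‖ ^ 2 = ft x := by
      intro x
      rw [norm_sub_rev]
      have e : St (R x) - x = (R x - x) + t • ζ (R x) := by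
        simp only [hSt]; abel
      rw [e, norm_add_sq_real, real_inner_smul_right, norm_smul, Real.norm_eq_abs,
        mul_pow, sq_abs, real_inner_comm]
      simp only [hft, hf₁, hg, hq2]
      ring
    have hftm : Measurable ft := (hf₁m.add (hgm.const_mul (2*t))).add (hq2m.const_mul (t^2))
    have hftint : Integrable ft μn := (hf₁int.add ((hgint.const_mul (2*t)))).add
      (hq2int.const_mul (t^2))
    have hft0 : ∀ x, 0 ≤ ft x := fun x => by rw [← hftpt x]; positivity
    have hftfin : ∫⁻ x, ENNReal.ofReal (ft x) ∂μn < ⊤ :=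
      (hasFiniteIntegral_iff_ofReal (Filter.Eventually.of_forall hft0)).1 hftint.2
    have hCtlt : ∫⁻ x, ENNReal.ofReal (‖x - St (R x)‖ ^ 2) ∂μn < ⊤ := by
      simp_rw [hftpt]; exact hftfin
    have hCt_toReal : (∫⁻ x, ENNReal.ofReal (‖x - St (R x)‖ ^ 2) ∂μn).toReal
        = Wr + 2*t*I₁ + t^2*I₂ := by
      simp_rw [hftpt]
      rw [DarcyAux.lintegral_toReal_eq hftm hft0 hftfin]
      simp only [hft]
      have e1 : ∫ x, (f₁ x + 2*t*g x + t^2 * q2 x) ∂μn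
          = (∫ x, (f₁ x + 2*t*g x) ∂μn) + ∫ x, t^2 * q2 x ∂μn :=
        integral_add (hf₁int.add (hgint.const_mul (2*t))) (hq2int.const_mul (t^2))
      have e2 : ∫ x, (f₁ x + 2*t*g x) ∂μn = (∫ x, f₁ x ∂μn) + ∫ x, 2*t*g x ∂μn :=
        integral_add hf₁int (hgint.const_mul (2*t))
      rw [e1, e2, integral_const_mul, integral_const_mul]
    have hchain := hmin ρt hρtm hρt0 hρtprob hρtmom
    have hchain2 : ENNReal.ofReal (1/(2*τ)) * W2sq μn μs
          + ∫⁻ z, ENNReal.ofReal (ρstar z ^ γ/(γ-1))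
        ≤ ENNReal.ofReal (1/(2*τ)) * (∫⁻ x, ENNReal.ofReal (‖x - St (R x)‖ ^ 2) ∂μn)
          + ∫⁻ z, ENNReal.ofReal (ρt z ^ γ/(γ-1)) :=
      le_trans hchain (add_le_add (by gcongr) le_rfl)
    have hLne : ENNReal.ofReal (1/(2*τ)) * W2sq μn μs
        + ∫⁻ z, ENNReal.ofReal (ρstar z ^ γ/(γ-1)) ≠ ⊤ :=
      ENNReal.add_ne_top.2 ⟨(ENNReal.mul_lt_top ENNReal.ofReal_lt_top hWlt).ne, hEstarlt.ne⟩
    have hRne : ENNReal.ofReal (1/(2*τ)) * (∫⁻ x, ENNReal.ofReal (‖x - St (R x)‖ ^ 2) ∂μn)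
        + ∫⁻ z, ENNReal.ofReal (ρt z ^ γ/(γ-1)) ≠ ⊤ :=
      ENNReal.add_ne_top.2 ⟨(ENNReal.mul_lt_top ENNReal.ofReal_lt_top hCtlt).ne, hEtlt.ne⟩
    have hreal := (ENNReal.toReal_le_toReal hLne hRne).2 hchain2
    rw [ENNReal.toReal_add ((ENNReal.mul_lt_top ENNReal.ofReal_lt_top hWlt).ne) hEstarlt.ne,
      ENNReal.toReal_add ((ENNReal.mul_lt_top ENNReal.ofReal_lt_top hCtlt).ne) hEtlt.ne,
      ENNReal.toReal_mul, ENNReal.toReal_mul, ENNReal.toReal_ofReal h2τ,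
      hWrW, hEstar_toReal, hCt_toReal, hEt_toReal] at hreal
    exact hreal
  -- Differentiability of the internal-energy term
  have hAcont : Continuous A := hζ.continuous_fderiv (by simp)
  have huniq : ∀ x, fderiv ℝ (DarcyAux.detF d) (1 + (0:ℝ) • A x) (A x)
      = DarcyAux.trsum (A x) := fun x =>
    HasDerivAt.unique (DarcyAux.hasDerivAt_detF_param (A x) 0)
      (DarcyAux.hasDerivAt_detF_zero (A x))
  have hEd : HasDerivAt Elin (∫ x, ρstar x ^ γ * ((1-γ) * DarcyAux.trsum (A x))) 0 := by
    set F' : ℝ → EuclideanSpace ℝ (Fin d) → ℝ := fun t x => ρstar x ^ γ *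
      (fderiv ℝ (DarcyAux.detF d) (1 + t • A x) (A x) * (1-γ) *
        (DarcyAux.detF d (1 + t • A x)) ^ (1-γ-1)) with hF'def
    have hF'0 : F' 0 = fun x => ρstar x ^ γ * ((1-γ) * DarcyAux.trsum (A x)) := by
      funext x
      simp only [hF'def]
      rw [huniq x]
      rw [show (1 : EuclideanSpace ℝ (Fin d) →L[ℝ] EuclideanSpace ℝ (Fin d)) + (0:ℝ) • A x
        = 1 by rw [show (0:ℝ) • A x = 0 from zero_smul ℝ (A x), add_zero], DarcyAux.detF_one, Real.one_rpow]
      ring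
    have hFmeas : ∀ᶠ t in nhds (0:ℝ), AEStronglyMeasurable
        (fun x => ρstar x ^ γ * (DarcyAux.detF d (1 + t • A x)) ^ (1-γ)) volume := by
      rw [Metric.eventually_nhds_iff]
      refine ⟨ε₀, hε₀0, fun t htd => ?_⟩
      have ht : |t| ≤ ε₀ := by
        rw [Real.dist_eq, sub_zero] at htd; exact le_of_lt htd
      obtain ⟨-, hdethalf, -, -⟩ := hpack t ht
      apply Measurable.aestronglyMeasurable
      apply hJm.mul
      have hBtc : Continuous fun x => DarcyAux.detF d (1 + t • A x) :=
        DarcyAux.contDiff_detF.continuous.comp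
          (continuous_const.add (hAcont.const_smul t))
      exact (hBtc.rpow_const fun x =>
        Or.inl (ne_of_gt (lt_trans (by norm_num) (hdethalf x)))).measurable
    have hFint : Integrable
        (fun x => ρstar x ^ γ * (DarcyAux.detF d (1 + (0:ℝ) • A x)) ^ (1-γ)) volume := by
      apply Integrable.congr hJint
      refine Filter.Eventually.of_forall fun x => ?_
      show ρstar x ^ γ = ρstar x ^ γ * DarcyAux.detF d (1 + (0:ℝ) • A x) ^ (1-γ)
      rw [show (1 : EuclideanSpace ℝ (Fin d) →L[ℝ] EuclideanSpace ℝ (Fin d)) + (0:ℝ) • A x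
        = 1 by rw [show (0:ℝ) • A x = 0 from zero_smul ℝ (A x), add_zero], DarcyAux.detF_one, Real.one_rpow, mul_one]
    have hF'meas : AEStronglyMeasurable (F' 0) volume := by
      rw [hF'0]
      apply Measurable.aestronglyMeasurable
      exact hJm.mul ((DarcyAux.trsum_continuous hAcont).measurable.const_mul (1-γ))
    have hbound : ∀ᵐ x ∂(volume : Measure (EuclideanSpace ℝ (Fin d))),
        ∀ t ∈ Metric.ball (0:ℝ) ε₀, ‖F' t x‖
          ≤ ρstar x ^ γ * ((C₂ * K) * ((γ-1) * 2 ^ γ)) := by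
      refine Filter.Eventually.of_forall fun x => ?_
      intro t htb
      have ht : |t| ≤ ε₀ := by
        rw [Metric.mem_ball, Real.dist_eq, sub_zero] at htb; exact le_of_lt htb
      obtain ⟨-, hdethalf, hC₂b, -⟩ := hpack t ht
      rw [Real.norm_eq_abs, hF'def]
      have hD' : |fderiv ℝ (DarcyAux.detF d) (1 + t • A x) (A x)| ≤ C₂ * K := by
        have h1 := (fderiv ℝ (DarcyAux.detF d) (1 + t • A x)).le_opNorm (A x)
        rw [← Real.norm_eq_abs]
        refine le_trans h1 (mul_le_mul (hC₂b x) (hK x) (norm_nonneg _) hC₂0)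
      exact DarcyAux.scalar_bound hγ (hJ0 x) hD' (hdethalf x)
    have hbint : Integrable
        (fun x => ρstar x ^ γ * ((C₂ * K) * ((γ-1) * 2 ^ γ))) volume :=
      hJint.mul_const _
    have hdiff : ∀ᵐ x ∂(volume : Measure (EuclideanSpace ℝ (Fin d))),
        ∀ t ∈ Metric.ball (0:ℝ) ε₀, HasDerivAt
          (fun s => ρstar x ^ γ * (DarcyAux.detF d (1 + s • A x)) ^ (1-γ)) (F' t x) t := by
      refine Filter.Eventually.of_forall fun x => ?_
      intro t htb
      have ht : |t| ≤ ε₀ := by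
        rw [Metric.mem_ball, Real.dist_eq, sub_zero] at htb; exact le_of_lt htb
      obtain ⟨-, hdethalf, -, -⟩ := hpack t ht
      have h1 := DarcyAux.hasDerivAt_detF_param (A x) t
      have h2 := h1.rpow_const (p := 1-γ)
        (Or.inl (ne_of_gt (lt_trans (by norm_num) (hdethalf x))))
      exact h2.const_mul (ρstar x ^ γ)
    have main := hasDerivAt_integral_of_dominated_loc_of_deriv_le (Metric.ball_mem_nhds 0 hε₀0) hFmeas hFint
      hF'meas hbound hbint hdiff
    have h2 := main.2
    rw [hF'0] at h2
    exact h2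
  -- local minimum at 0 and conclusion
  set hfn : ℝ → ℝ :=
    fun t => (1/(2*τ))*(2*t*I₁ + t^2*I₂) + (γ-1)⁻¹*(Elin t - J) with hhfn
  have hElin0 : Elin 0 = J := by
    simp only [hElin, hJdef]
    congr 1
    funext x
    rw [show (1 : EuclideanSpace ℝ (Fin d) →L[ℝ] EuclideanSpace ℝ (Fin d)) + (0:ℝ) • A x
      = 1 by rw [show (0:ℝ) • A x = 0 from zero_smul ℝ (A x), add_zero], DarcyAux.detF_one, Real.one_rpow, mul_one]
  have hnonneg : ∀ t, |t| ≤ ε₀ → 0 ≤ hfn t := by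
    intro t ht
    have h := key t ht
    have e1 : (1/(2*τ))*(Wr + 2*t*I₁ + t^2*I₂)
        = (1/(2*τ))*Wr + (1/(2*τ))*(2*t*I₁ + t^2*I₂) := by ring
    have e2 : (γ-1)⁻¹*(Elin t - J) = (γ-1)⁻¹*(Elin t) - (γ-1)⁻¹*J := by ring
    rw [e1] at h
    simp only [hhfn]
    rw [e2]
    linarith
  have hmin0 : IsLocalMin hfn 0 := by
    have hev : ∀ᶠ s in nhds (0:ℝ), hfn 0 ≤ hfn s := by
      rw [Metric.eventually_nhds_iff]
      refine ⟨ε₀, hε₀0, fun s hs => ?_⟩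
      have h0 : hfn 0 = 0 := by
        simp only [hhfn, hElin0]
        ring
      rw [h0]
      refine hnonneg s (le_of_lt ?_)
      rwa [Real.dist_eq, sub_zero] at hs
    exact hev
  have hd0 : HasDerivAt hfn
      ((1/(2*τ))*(2*I₁) + (γ-1)⁻¹*(∫ x, ρstar x ^ γ * ((1-γ) * DarcyAux.trsum (A x)))) 0 := by
    have p1a : HasDerivAt (fun s : ℝ => 2*s*I₁ + s^2*I₂) (2*I₁) 0 := by
      have h1 : HasDerivAt (fun s : ℝ => 2*s*I₁) (2*I₁) 0 := by
        simpa using ((hasDerivAt_id (0:ℝ)).const_mul 2).mul_const I₁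
      have h2 : HasDerivAt (fun s : ℝ => s^2*I₂) 0 0 := by
        simpa using (hasDerivAt_pow 2 (0:ℝ)).mul_const I₂
      exact (h1.add h2).congr_deriv (by simp)
    have p1 := p1a.const_mul (1/(2*τ))
    have p2 := (hEd.sub_const J).const_mul ((γ-1)⁻¹)
    exact p1.add p2
  have hzero := hmin0.deriv_eq_zero
  rw [hd0.deriv] at hzero
  have hEderiv : ∫ x, ρstar x ^ γ * ((1-γ) * DarcyAux.trsum (A x))
      = (1-γ) * ∫ x, ρstar x ^ γ * DarcyAux.trsum (A x) := by
    rw [← integral_const_mul]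
    congr 1
    funext x
    ring
  rw [hEderiv] at hzero
  have hcancel : (γ-1)⁻¹ * ((1-γ) * ∫ x, ρstar x ^ γ * DarcyAux.trsum (A x))
      = -(∫ x, ρstar x ^ γ * DarcyAux.trsum (A x)) := by
    have : (γ-1)⁻¹ * (1-γ) = -1 := by
      field_simp
      ring
    rw [← mul_assoc, this]
    ring
  rw [hcancel] at hzero
  have hfinal : (1/τ) * I₁ = ∫ x, ρstar x ^ γ * DarcyAux.trsum (A x) := by
    have hτne : τ ≠ 0 := ne_of_gt hτ
    field_simp at hzero ⊢
    linarith
  have hI₁vol : I₁ = ∫ x, g x * ρn x := by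
    rw [hI₁def, hμn, DarcyAux.integral_withDensity_aux hρn_meas hρn_nonneg]
  have hgoalL : (1 / τ) * (∫ x, (inner ℝ (ζ (R x)) (R x - x) : ℝ) * ρn x) = (1/τ) * I₁ := by
    rw [hI₁vol]
  have hgoalR : ∫ x, ρstar x ^ γ * DarcyAux.trsum (A x)
      = ∫ z, ρstar z ^ γ * ∑ j, fderiv ℝ ζ z (EuclideanSpace.single j 1) j := by
    congr 1
  rw [hgoalL, hfinal]
  exact hgoalR
end
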